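/- arXiv:1409.4632 — 2 statements merged into one kernel-verified Lean document; each statement's English description precedes it below -/
import Mathlib

section
/- Suppose (H, J) is a 2-separation of a graph G with V(H) ∩ V(J) = {x, y}, and suppose G contains a standard K_{2,t} minor (R_1, R_2; S) with t ≥ 3. Then at least one of the following holds: (i) H + xy has a K_{2,t} minor; (ii) J + xy has a K_{2,t} minor; (iii) x ∈ R_1 and y ∈ R_2, or x ∈ R_2 and y ∈ R_1. -/
namespace K24Paper

open SimpleGraph

/-- `H` is a minor of `G`: branch sets indexed by vertices of `H`, pairwise disjoint,
each inducing a connected subgraph of `G`, with every edge of `H` realized by an edge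
of `G` between the corresponding branch sets. -/
def IsMinor {W V : Type*} (H : SimpleGraph W) (G : SimpleGraph V) : Prop :=
  ∃ B : W → Set V,
    (∀ w, (G.induce (B w)).Connected) ∧
    (∀ w₁ w₂, w₁ ≠ w₂ → Disjoint (B w₁) (B w₂)) ∧
    (∀ w₁ w₂, H.Adj w₁ w₂ → ∃ v₁ ∈ B w₁, ∃ v₂ ∈ B w₂, G.Adj v₁ v₂)

/-- `G` is `H`-minor-free. -/
def MinorFree {W V : Type*} (H : SimpleGraph W) (G : SimpleGraph V) : Prop :=
  ¬ IsMinor H G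

/-- The complete bipartite graph `K_{2,4}`. -/
def K24 : SimpleGraph (Fin 2 ⊕ Fin 4) := completeBipartiteGraph (Fin 2) (Fin 4)

/-- `G` is `k`-connected: more than `k` vertices, and removing fewer than `k`
vertices leaves a connected graph. -/
def KConnected {V : Type*} (k : ℕ) (G : SimpleGraph V) : Prop :=
  k < Nat.card V ∧ ∀ S : Set V, S.ncard < k → (G.induce Sᶜ).Connected

/-- The graph `G_{n,r,s}` (with the plus edge if `plus = true`), on vertices
`0, …, n-1` corresponding to `v_1, …, v_n`:  the spine `v_1 v_2 ⋯ v_n`, the edges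
`v_1 v_{n-i}` for `1 ≤ i ≤ r`, the edges `v_n v_{1+j}` for `1 ≤ j ≤ s`, and
(if `plus`) the plus edge `v_1 v_n`. -/
def Gnrs (n r s : ℕ) (plus : Bool) : SimpleGraph (Fin n) :=
  SimpleGraph.fromRel (fun a b =>
    b.val = a.val + 1 ∨
    (a.val = 0 ∧ n - 1 - r ≤ b.val ∧ b.val ≤ n - 2) ∨
    (b.val = n - 1 ∧ 1 ≤ a.val ∧ a.val ≤ s) ∨
    (plus = true ∧ a.val = 0 ∧ b.val = n - 1))

/-- The parameter conditions describing membership in the class `𝒢`. -/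
def Gparams (n r s : ℕ) (plus : Bool) : Prop :=
  (plus = true ∧ 4 ≤ n ∧ ((r = 1 ∧ s = n - 3) ∨ (r = n - 3 ∧ s = 1))) ∨
  (5 ≤ n ∧ 2 ≤ r ∧ r ≤ n - 3 ∧ 2 ≤ s ∧ s ≤ n - 3 ∧ (r + s = n - 2 ∨ r + s = n - 1))

/-- `G` belongs to `𝒢̃`, i.e. `G` is isomorphic to a graph of the class `𝒢`. -/
def InGtilde {V : Type*} (G : SimpleGraph V) : Prop :=
  ∃ n r s plus, Gparams n r s plus ∧ Nonempty (G ≃g Gnrs n r s plus)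

/-- The graph obtained from `G` by subdividing every edge in `F` once:
new vertices are the members of `F`. -/
def SubdivideEdges {V : Type*} (G : SimpleGraph V) (F : Set (Sym2 V)) :
    SimpleGraph (V ⊕ F) :=
  SimpleGraph.fromRel (fun a b =>
    match a, b with
    | Sum.inl u, Sum.inl v => G.Adj u v ∧ s(u, v) ∉ F
    | Sum.inl u, Sum.inr e => u ∈ (e : Sym2 V)
    | Sum.inr e, Sum.inl u => u ∈ (e : Sym2 V)
    | Sum.inr _, Sum.inr _ => False)

/-- A set `F` of edges of a graph `G` is subdividable if subdividing every edge
of `F` once yields a `K_{2,4}`-minor-free graph. -/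
def Subdividable {V : Type*} (G : SimpleGraph V) (F : Set (Sym2 V)) : Prop :=
  F ⊆ G.edgeSet ∧ MinorFree K24 (SubdivideEdges G F)

/-- `F` is a maximal subdividable set of edges of `G`. -/
def MaxSubdividable {V : Type*} (G : SimpleGraph V) (F : Set (Sym2 V)) : Prop :=
  Subdividable G F ∧ ∀ F', Subdividable G F' → F ⊆ F' → F' = F

/-- `l` lists vertices along a path of `G` (consecutive entries adjacent, no repeats)
such that no two edges of `G` cross with respect to this ordering. -/
def OuterListing {U : Type*} (G : SimpleGraph U) (l : List U) : Prop :=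
  l.Nodup ∧ l.Chain' G.Adj ∧
  ∀ (i k j m : ℕ) (h1 : i < k) (h2 : k < j) (h3 : j < m) (hm : m < l.length),
    ¬(G.Adj (l.get ⟨i, by omega⟩) (l.get ⟨j, by omega⟩) ∧
      G.Adj (l.get ⟨k, by omega⟩) (l.get ⟨m, by omega⟩))

/-- The graph `G` restricted to the vertex set `A` is `xy`-outerplanar: it has a
hamilton `xy`-path (listing exactly the vertices of `A`) such that no two edges
cross with respect to it. -/
def XYOuterplanar {U : Type*} (G : SimpleGraph U) (A : Set U) (x y : U) : Prop :=
  ∃ l : List U, (∀ v, v ∈ l ↔ v ∈ A) ∧ l.head? = some x ∧ l.getLast? = some y ∧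
    OuterListing G l

/-- A block: a connected graph with no cutvertex. -/
def IsBlock {V : Type*} (G : SimpleGraph V) : Prop :=
  G.Connected ∧ ∀ v : V, (G.induce {u | u ≠ v}).Preconnected

/-- `G + xy`: the graph `G` with the edge `xy` added (if not already present). -/
def AddEdge {U : Type*} (G : SimpleGraph U) (x y : U) : SimpleGraph U :=
  G ⊔ SimpleGraph.fromRel (fun a b => a = x ∧ b = y)

/-- A standard `K_{2,t}` minor `(R₁, R₂; S)` of `G`. -/
def StdK2tMinor {V : Type*} (G : SimpleGraph V) (t : ℕ) (R₁ R₂ S : Set V) : Prop :=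
  Disjoint R₁ R₂ ∧ Disjoint (R₁ ∪ R₂) S ∧
  (G.induce R₁).Connected ∧ (G.induce R₂).Connected ∧
  S.Finite ∧ S.ncard = t ∧
  ∀ v ∈ S, (∃ w ∈ R₁, G.Adj v w) ∧ (∃ w ∈ R₂, G.Adj v w)

/-- `K_{3,3}` with parts `{0,1,2}` and `{3,4,5}`. -/
def K33 : SimpleGraph (Fin 6) :=
  SimpleGraph.fromRel (fun a b => a.val < 3 ∧ 3 ≤ b.val)

/-- The graph `A = K_{3,3} + v₂v₃`. -/
def GA : SimpleGraph (Fin 6) := AddEdge K33 1 2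

/-- The graph `A⁺ = K_{3,3} + v₂v₃ + v₅v₆`. -/
def GAplus : SimpleGraph (Fin 6) := AddEdge GA 4 5

/-- The graph `B`, on vertices `h, r₁, r₂, r₃, r₄, g₁, g₂ = 0, …, 6`. -/
def GB : SimpleGraph (Fin 7) :=
  SimpleGraph.fromRel (fun a b => (a.val, b.val) ∈
    [(0,3),(0,4),(1,4),(2,3),(3,4),(5,0),(5,1),(5,2),(6,0),(6,1),(6,2)])

/-- The graph `B⁺ = B + g₁g₂`. -/
def GBplus : SimpleGraph (Fin 7) := AddEdge GB 5 6

/-- The graph `C⁺`, on vertices `v₁, …, v₈ = 0, …, 7`. -/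
def GCplus : SimpleGraph (Fin 8) :=
  SimpleGraph.fromRel (fun a b => (a.val, b.val) ∈
    [(0,1),(0,2),(1,2),(3,4),(3,5),(3,6),(3,7),(4,5),(4,6),(4,7),(2,5),(1,7),(0,6)])

/-- The graph `C = C⁺ ∖ v₄v₅`. -/
def GC : SimpleGraph (Fin 8) := GCplus.deleteEdges {s(3, 4)}

/-- The graph `D`, on vertices `t₁, t₂, t₃, d₁, d₂, d₃, g = 0, …, 6`. -/
def GD : SimpleGraph (Fin 7) :=
  SimpleGraph.fromRel (fun a b => (a.val, b.val) ∈
    [(0,1),(0,2),(1,2),(3,4),(3,5),(4,5),(0,3),(1,4),(2,5),(6,0),(6,1),(6,2)])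

/-- The complete graph `K₅`. -/
def GK5 : SimpleGraph (Fin 5) := completeGraph (Fin 5)

end K24Paper

namespace K24Paper

open SimpleGraph

/-!
A connected set of `G` avoiding `x` and `y` lies inside `V(H) - V(J)` or inside `V(J) - V(H)`.
Unless (iii) holds, one branch set, say `R₂`, avoids `x` and `y` and so lies on one side,
say `V(J) - V(H)`, while `R₁` lies on the same side or contains `x` or `y`. Intersecting `R₁`
with `V(J)` then gives a standard `K_{2,t}` minor of `J + xy`: a path of `R₁` can only leave
`V(J) - V(H)` through `x` or `y`, and the edge `xy` reconnects `y` to `x`. If both branch sets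
avoid `x` and `y` but lie on different sides, every vertex of `S` is in `{x, y}`, so `t ≤ 2`.
-/

section Shores

variable {V : Type*} {G G' : SimpleGraph V} {t : ℕ} {R₁ R₂ S : Set V}

theorem StdK2tMinor.symm (h : StdK2tMinor G t R₁ R₂ S) : StdK2tMinor G t R₂ R₁ S := by
  obtain ⟨h12, hS, hc₁, hc₂, hfin, hcard, hadj⟩ := h
  exact ⟨h12.symm, Set.union_comm R₁ R₂ ▸ hS, hc₂, hc₁, hfin, hcard,
    fun v hv => (hadj v hv).symm⟩

theorem StdK2tMinor.isMinor (h : StdK2tMinor G t R₁ R₂ S) :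
    IsMinor (completeBipartiteGraph (Fin 2) (Fin t)) G := by
  obtain ⟨h12, hS, hc₁, hc₂, hfin, hcard, hadj⟩ := h
  have : Finite S := hfin.to_subtype
  let e : Fin t ≃ S :=
    (finCongr (by rw [Nat.card_coe_set_eq, hcard])).trans (Finite.equivFin S).symm
  let R : Fin 2 → Set V := ![R₁, R₂]
  have hR_nmem : ∀ i j, (e j : V) ∉ R i := by
    intro i j hj
    refine Set.disjoint_left.mp hS ?_ (e j).2
    fin_cases i
    exacts [Or.inl hj, Or.inr hj]
  have hR_adj : ∀ i j, ∃ w ∈ R i, G.Adj (e j) w := by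
    intro i j; fin_cases i
    exacts [(hadj _ (e j).2).1, (hadj _ (e j).2).2]
  refine ⟨Sum.elim R fun j => {(e j : V)}, ?_, ?_, ?_⟩
  · rintro (i | j)
    · fin_cases i
      exacts [hc₁, hc₂]
    · simp only [Sum.elim_inr, induce_singleton_eq_top]
      exact connected_top
  · rintro (i₁ | j₁) (i₂ | j₂) hne <;> simp only [Sum.elim_inl, Sum.elim_inr]
    · have : i₁ ≠ i₂ := fun h => hne (h ▸ rfl)
      fin_cases i₁ <;> fin_cases i₂ <;> simp_all [R, h12.symm]
    · exact Set.disjoint_singleton_right.mpr (hR_nmem i₁ j₂)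
    · exact Set.disjoint_singleton_left.mpr (hR_nmem i₂ j₁)
    · have : j₁ ≠ j₂ := fun h => hne (h ▸ rfl)
      exact Set.disjoint_singleton.mpr fun h => this (e.injective (Subtype.ext h))
  · rintro (i₁ | j₁) (i₂ | j₂) hadj'
    · simp at hadj'
    · obtain ⟨w, hw, hGw⟩ := hR_adj i₁ j₂
      exact ⟨w, hw, e j₂, rfl, hGw.symm⟩
    · obtain ⟨w, hw, hGw⟩ := hR_adj i₂ j₁
      exact ⟨e j₁, rfl, w, hw, hGw⟩
    · simp at hadj'

/-- `Q` is one side of the cut `{x, y}` of `G`, and `G'` contains `xy` and every edge of `G`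
leaving `Q`. -/
structure IsShore (G G' : SimpleGraph V) (Q : Set V) (x y : V) : Prop where
  adj_xy : G'.Adj x y
  mem_of_adj : ∀ ⦃u v⦄, G.Adj u v → u ∈ Q → v ∈ Q ∪ {x, y}
  adj_of_adj : ∀ ⦃u v⦄, G.Adj u v → u ∈ Q → G'.Adj u v

namespace IsShore

variable {Q : Set V} {x y : V}

theorem symm (hQ : IsShore G G' Q x y) : IsShore G G' Q y x where
  adj_xy := hQ.adj_xy.symm
  mem_of_adj _ _ h hu := Set.pair_comm x y ▸ hQ.mem_of_adj h hu
  adj_of_adj := hQ.adj_of_adj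

theorem subset_of_connected (hQ : IsShore G G' Q x y) {C : Set V}
    (hC : (G.induce C).Connected) (hx : x ∉ C) (hy : y ∉ C) {c : V} (hcC : c ∈ C)
    (hcQ : c ∈ Q) : C ⊆ Q := by
  intro v hvC
  by_contra hvQ
  obtain ⟨p⟩ := hC.preconnected ⟨c, hcC⟩ ⟨v, hvC⟩
  obtain ⟨d, -, hd₁, hd₂⟩ := p.exists_boundary_dart {w | (w : V) ∈ Q} hcQ hvQ
  rcases hQ.mem_of_adj d.adj hd₁ with h | h | h
  · exact hd₂ h
  · exact hx (h ▸ d.snd.2)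
  · exact hy (h ▸ d.snd.2)

theorem reachable_of_walk (hQ : IsShore G G' Q x y) {R : Set V} (hxR : x ∈ R)
    {u v : R} (p : (G.induce R).Walk u v) (hv : (v : V) = x) (hu : (u : V) ∈ Q ∪ {x, y}) :
    (G'.induce (R ∩ (Q ∪ {x, y}))).Reachable ⟨u, u.2, hu⟩ ⟨x, hxR, by simp⟩ := by
  induction p with
  | nil => subst hv; rfl
  | @cons u w _ h p ih =>
    rcases hu with huQ | hux | huy
    · have hw := hQ.mem_of_adj h huQ
      have huw : (G'.induce (R ∩ (Q ∪ {x, y}))).Adj ⟨u, u.2, Or.inl huQ⟩ ⟨w, w.2, hw⟩ :=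
        hQ.adj_of_adj h huQ
      exact huw.reachable.trans (ih hv hw)
    · obtain ⟨u, huR⟩ := u
      subst hux
      rfl
    · have hux : (G'.induce (R ∩ (Q ∪ {x, y}))).Adj ⟨u, u.2, Or.inr (Or.inr huy)⟩
          ⟨x, hxR, by simp⟩ := by
        simpa [Set.mem_singleton_iff.mp huy] using hQ.adj_xy.symm
      exact hux.reachable

theorem connected_of_subset (hQ : IsShore G G' Q x y) {R : Set V}
    (hR : (G.induce R).Connected) (hRQ : R ⊆ Q) : (G'.induce R).Connected :=
  hR.mono fun a _ h => hQ.adj_of_adj h (hRQ a.2)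

theorem connected_inter (hQ : IsShore G G' Q x y) {R : Set V}
    (hR : (G.induce R).Connected) (hxR : x ∈ R) :
    (G'.induce (R ∩ (Q ∪ {x, y}))).Connected := by
  have : Nonempty ↥(R ∩ (Q ∪ {x, y})) := ⟨⟨x, hxR, by simp⟩⟩
  have hreach : ∀ a, (G'.induce (R ∩ (Q ∪ {x, y}))).Reachable a ⟨x, hxR, by simp⟩ :=
    fun ⟨u, huR, hu⟩ =>
      hQ.reachable_of_walk hxR (hR.preconnected ⟨u, huR⟩ ⟨x, hxR⟩).some rfl hu
  exact ⟨fun a b => (hreach a).trans (hreach b).symm⟩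

theorem stdK2tMinor (hQ : IsShore G G' Q x y) (h : StdK2tMinor G t R₁ R₂ S) (hR₂ : R₂ ⊆ Q)
    (hR₁ : R₁ ⊆ Q ∨ x ∈ R₁) : StdK2tMinor G' t (R₁ ∩ (Q ∪ {x, y})) R₂ S := by
  obtain ⟨h12, hS, hc₁, hc₂, hfin, hcard, hadj⟩ := h
  refine ⟨h12.mono_left Set.inter_subset_left,
    hS.mono_left (Set.union_subset_union_left _ Set.inter_subset_left), ?_,
    hQ.connected_of_subset hc₂ hR₂, hfin, hcard, fun s hs => ?_⟩
  · rcases hR₁ with hR₁ | hxR₁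
    · rw [Set.inter_eq_left.mpr (hR₁.trans Set.subset_union_left)]
      exact hQ.connected_of_subset hc₁ hR₁
    · exact hQ.connected_inter hc₁ hxR₁
  obtain ⟨⟨w₁, hw₁, hsw₁⟩, ⟨w₂, hw₂, hsw₂⟩⟩ := hadj s hs
  refine ⟨?_, w₂, hw₂, (hQ.adj_of_adj hsw₂.symm (hR₂ hw₂)).symm⟩
  rcases hQ.mem_of_adj hsw₂.symm (hR₂ hw₂) with hsQ | hsxy
  · exact ⟨w₁, ⟨hw₁, hQ.mem_of_adj hsw₁ hsQ⟩, hQ.adj_of_adj hsw₁ hsQ⟩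
  rcases hR₁ with hR₁ | hxR₁
  · exact ⟨w₁, ⟨hw₁, Or.inl (hR₁ hw₁)⟩, (hQ.adj_of_adj hsw₁.symm (hR₁ hw₁)).symm⟩
  have hsy : s = y := by
    refine hsxy.resolve_left fun hsx => Set.disjoint_left.mp hS (Or.inl ?_) hs
    exact hsx ▸ hxR₁
  exact ⟨x, ⟨hxR₁, by simp⟩, hsy ▸ hQ.adj_xy.symm⟩

theorem isMinor (hQ : IsShore G G' Q x y) (h : StdK2tMinor G t R₁ R₂ S) (hR₂ : R₂ ⊆ Q)
    (hR₁ : R₁ ⊆ Q ∨ x ∈ R₁ ∨ y ∈ R₁) :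
    IsMinor (completeBipartiteGraph (Fin 2) (Fin t)) G' := by
  rcases hR₁ with hR₁ | hxR₁ | hyR₁
  · exact (hQ.stdK2tMinor h hR₂ (Or.inl hR₁)).isMinor
  · exact (hQ.stdK2tMinor h hR₂ (Or.inr hxR₁)).isMinor
  · exact (hQ.symm.stdK2tMinor h hR₂ (Or.inr hyR₁)).isMinor

end IsShore

variable {G₁ G₂ : SimpleGraph V} {A B : Set V} {x y : V}

theorem StdK2tMinor.le_two_of_subset_shores (h : StdK2tMinor G t R₁ R₂ S)
    (hA : IsShore G G₁ A x y) (hB : IsShore G G₂ B x y) (hAB : Disjoint A B)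
    (hR₁ : R₁ ⊆ A) (hR₂ : R₂ ⊆ B) : t ≤ 2 := by
  obtain ⟨-, -, -, -, -, hcard, hadj⟩ := h
  have hS : S ⊆ {x, y} := by
    intro s hs
    obtain ⟨⟨w₁, hw₁, hsw₁⟩, ⟨w₂, hw₂, hsw₂⟩⟩ := hadj s hs
    rcases hA.mem_of_adj hsw₁.symm (hR₁ hw₁) with hsA | hsxy
    · rcases hB.mem_of_adj hsw₂.symm (hR₂ hw₂) with hsB | hsxy
      · exact absurd hsB (Set.disjoint_left.mp hAB hsA)
      · exact hsxy
    · exact hsxy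
  calc t = S.ncard := hcard.symm
    _ ≤ ({x, y} : Set V).ncard := Set.ncard_le_ncard hS
    _ ≤ 2 := (Set.ncard_insert_le _ _).trans (by simp)

theorem isMinor_or_isMinor_or_mem_of_shores (hA : IsShore G G₁ A x y)
    (hB : IsShore G G₂ B x y) (hAB : Disjoint A B)
    (hcover : ∀ v, v ∈ A ∨ v ∈ B ∨ v = x ∨ v = y) (ht : 3 ≤ t)
    (h : StdK2tMinor G t R₁ R₂ S) :
    IsMinor (completeBipartiteGraph (Fin 2) (Fin t)) G₁ ∨
    IsMinor (completeBipartiteGraph (Fin 2) (Fin t)) G₂ ∨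
    ((x ∈ R₁ ∧ y ∈ R₂) ∨ (x ∈ R₂ ∧ y ∈ R₁)) := by
  have hside : ∀ {C}, (G.induce C).Connected → x ∉ C → y ∉ C → C ⊆ A ∨ C ⊆ B := by
    intro C hC hx hy
    obtain ⟨⟨c, hc⟩⟩ := hC.nonempty
    rcases hcover c with hcA | hcB | rfl | rfl
    · exact Or.inl (hA.subset_of_connected hC hx hy hc hcA)
    · exact Or.inr (hB.subset_of_connected hC hx hy hc hcB)
    · exact absurd hc hx
    · exact absurd hc hy
  have hmeet : ∀ {Ra Rb}, StdK2tMinor G t Ra Rb S → x ∉ Rb → y ∉ Rb → x ∈ Ra ∨ y ∈ Ra →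
      IsMinor (completeBipartiteGraph (Fin 2) (Fin t)) G₁ ∨
      IsMinor (completeBipartiteGraph (Fin 2) (Fin t)) G₂ := by
    intro Ra Rb h hx hy hRa
    rcases hside h.2.2.2.1 hx hy with hRb | hRb
    · exact Or.inl (hA.isMinor h hRb (Or.inr hRa))
    · exact Or.inr (hB.isMinor h hRb (Or.inr hRa))
  by_cases h₁ : x ∈ R₁ ∨ y ∈ R₁ <;> by_cases h₂ : x ∈ R₂ ∨ y ∈ R₂
  · have hx : x ∈ R₁ → x ∉ R₂ := fun hx => Set.disjoint_left.mp h.1 hx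
    have hy : y ∈ R₁ → y ∉ R₂ := fun hy => Set.disjoint_left.mp h.1 hy
    tauto
  · push Not at h₂
    exact (hmeet h h₂.1 h₂.2 h₁).elim Or.inl (Or.inr ∘ Or.inl)
  · push Not at h₁
    exact (hmeet h.symm h₁.1 h₁.2 h₂).elim Or.inl (Or.inr ∘ Or.inl)
  push Not at h₁ h₂
  rcases hside h.2.2.1 h₁.1 h₁.2 with h₁A | h₁B <;>
    rcases hside h.2.2.2.1 h₂.1 h₂.2 with h₂A | h₂B
  · exact Or.inl (hA.isMinor h h₂A (Or.inl h₁A))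
  · exact absurd (h.le_two_of_subset_shores hA hB hAB h₁A h₂B) (by omega)
  · exact absurd (h.symm.le_two_of_subset_shores hA hB hAB h₂A h₁B) (by omega)
  · exact Or.inr (Or.inl (hB.isMinor h h₂B (Or.inl h₁B)))

theorem isShore_of_sup_eq_top {H J : G.Subgraph} (hunion : H ⊔ J = ⊤) (hxy : x ≠ y)
    (hcut : H.verts ∩ J.verts = {x, y}) :
    IsShore G (AddEdge H.spanningCoe x y) (H.verts \ J.verts) x y := by
  have hH : ∀ ⦃u v⦄, G.Adj u v → u ∈ H.verts \ J.verts → H.Adj u v := by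
    intro u v huv hu
    have : (H ⊔ J).Adj u v := hunion ▸ huv
    exact (Subgraph.sup_adj.mp this).resolve_right fun hJ => hu.2 hJ.fst_mem
  refine ⟨Or.inr ⟨hxy, Or.inl ⟨rfl, rfl⟩⟩, fun u v huv hu => ?_,
    fun u v huv hu => Or.inl (hH huv hu)⟩
  by_cases hvJ : v ∈ J.verts
  · exact Or.inr (hcut ▸ ⟨(hH huv hu).snd_mem, hvJ⟩)
  · exact Or.inl ⟨(hH huv hu).snd_mem, hvJ⟩

end Shores

theorem two_separation_K2t_general {V : Type*} (G : SimpleGraph V) (H J : G.Subgraph)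
    (hunion : H ⊔ J = ⊤)
    (x y : V) (hxy : x ≠ y) (hcut : H.verts ∩ J.verts = {x, y})
    (t : ℕ) (ht : 3 ≤ t) (R₁ R₂ S : Set V) (hstd : StdK2tMinor G t R₁ R₂ S) :
    IsMinor (completeBipartiteGraph (Fin 2) (Fin t)) (AddEdge H.spanningCoe x y) ∨
    IsMinor (completeBipartiteGraph (Fin 2) (Fin t)) (AddEdge J.spanningCoe x y) ∨
    ((x ∈ R₁ ∧ y ∈ R₂) ∨ (x ∈ R₂ ∧ y ∈ R₁)) := by
  have hcover : ∀ v, v ∈ H.verts \ J.verts ∨ v ∈ J.verts \ H.verts ∨ v = x ∨ v = y := by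
    intro v
    have hv : v ∈ H.verts ∪ J.verts := by
      rw [← Subgraph.verts_sup, hunion]
      trivial
    have hvxy := Set.ext_iff.mp hcut v
    simp only [Set.mem_inter_iff, Set.mem_insert_iff, Set.mem_singleton_iff] at hvxy
    simp only [Set.mem_union] at hv
    simp only [Set.mem_sdiff]
    tauto
  exact isMinor_or_isMinor_or_mem_of_shores (isShore_of_sup_eq_top hunion hxy hcut)
    (isShore_of_sup_eq_top (sup_comm H J ▸ hunion) hxy (Set.inter_comm .. ▸ hcut))
    disjoint_sdiff_sdiff hcover ht hstd

/-- Lemma 14: if `(H, J)` is a 2-separation of `G` with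
`V(H) ∩ V(J) = {x, y}` and `G` has a standard `K_{2,t}` minor `(R₁, R₂; S)` with
`t ≥ 3`, then `H + xy` has a `K_{2,t}` minor, or `J + xy` has a `K_{2,t}` minor, or
`x ∈ R₁` and `y ∈ R₂` (or vice versa). -/
theorem two_separation_K2t {V : Type*} (G : SimpleGraph V) (H J : G.Subgraph)
    (hunion : H ⊔ J = ⊤) (hedisj : Disjoint H.edgeSet J.edgeSet)
    (x y : V) (hxy : x ≠ y) (hcut : H.verts ∩ J.verts = {x, y})
    (hHne : (H.verts \ J.verts).Nonempty) (hJne : (J.verts \ H.verts).Nonempty)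
    (t : ℕ) (ht : 3 ≤ t) (R₁ R₂ S : Set V) (hstd : StdK2tMinor G t R₁ R₂ S) :
    IsMinor (completeBipartiteGraph (Fin 2) (Fin t)) (AddEdge H.spanningCoe x y) ∨
    IsMinor (completeBipartiteGraph (Fin 2) (Fin t)) (AddEdge J.spanningCoe x y) ∨
    ((x ∈ R₁ ∧ y ∈ R₂) ∨ (x ∈ R₂ ∧ y ∈ R₁)) :=
  two_separation_K2t_general G H J hunion x y hxy hcut t ht R₁ R₂ S hstd
end K24Paper
end

section
/- Let t ≥ 3, let z be a vertex of degree 2 in a graph G with neighbors x and y, and let J be an xy-outerplanar graph on at least three vertices with V(J) ∩ V(G) = {x, y}. Let G' be the graph obtained from G by replacing the path xzy with J, that is, G' = (G − z) ∪ J. Then G is K_{2,t}-minor-free if and only if G' is K_{2,t}-minor-free. -/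
/-!
Write `G = H + zx + zy` with `H = G - z`, so that `G' = H ∪ J`, and let `I` be the interior of
the outer path `x, …, y` of `J`. A `K_{2,t}` model in `G` becomes one in `G'` by expanding `z`
to the path `I`.

Conversely, take a model in `G'`. The only exits from `I` are `x` and `y`, so a branch set
meeting `I` without lying inside it contains `x` or `y`, and the trace of each branch set on `J`
is connected in `J + xy`, a graph without crossing edges along the path. Disjoint connected sets
of such a graph cannot interleave along the path. This rules out a `K_{2,3}` model in `J + xy`,
and also two branch sets inside `I` that are both adjacent to a branch set through `x` and to one
through `y` (`x` and `y` are the ends of the path). Hence at most one branch set lies inside `I`.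
Deleting `I` from all branch sets and giving `z` to that branch set, or else to the one through
`x`, yields a model in `G`.
-/

namespace K24Paper

open SimpleGraph

section Connectivity

variable {V V' : Type*}

def ReachableIn (G : SimpleGraph V) (s : Set V) (u v : V) : Prop :=
  ∃ (hu : u ∈ s) (hv : v ∈ s), (G.induce s).Reachable ⟨u, hu⟩ ⟨v, hv⟩

variable {G : SimpleGraph V} {G' : SimpleGraph V'} {s t : Set V} {u v w : V}

theorem ReachableIn.refl (hu : u ∈ s) : ReachableIn G s u u := ⟨hu, hu, .rfl⟩

theorem ReachableIn.symm (h : ReachableIn G s u v) : ReachableIn G s v u :=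
  let ⟨hu, hv, h⟩ := h; ⟨hv, hu, h.symm⟩

theorem ReachableIn.trans (h₁ : ReachableIn G s u v) (h₂ : ReachableIn G s v w) :
    ReachableIn G s u w :=
  let ⟨hu, _, h₁⟩ := h₁; let ⟨_, hw, h₂⟩ := h₂; ⟨hu, hw, h₁.trans h₂⟩

theorem ReachableIn.of_adj (h : G.Adj u v) (hu : u ∈ s) (hv : v ∈ s) : ReachableIn G s u v :=
  ⟨hu, hv, Adj.reachable (induce_adj.mpr h)⟩

theorem ReachableIn.of_connected (h : (G.induce s).Connected) (hu : u ∈ s) (hv : v ∈ s) :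
    ReachableIn G s u v :=
  ⟨hu, hv, h.preconnected _ _⟩

theorem ReachableIn.mono (h : ReachableIn G s u v) (hst : s ⊆ t) : ReachableIn G t u v :=
  let ⟨hu, hv, h⟩ := h
  ⟨hst hu, hst hv, h.map (induceHomOfLE G hst).toHom⟩

theorem ReachableIn.induction {P : V → V → Prop} (h : ReachableIn G s u v)
    (refl : ∀ a ∈ s, P a a) (head : ∀ a ∈ s, ∀ b ∈ s, ∀ c ∈ s, G.Adj a b → P b c → P a c) :
    P u v := by
  obtain ⟨hu, hv, ⟨p⟩⟩ := h
  suffices ∀ a b : s, (G.induce s).Walk a b → P a b from this _ _ p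
  intro a b p
  induction p with
  | nil => exact refl _ (Subtype.prop _)
  | cons hab _ ih => exact head _ (Subtype.prop _) _ (Subtype.prop _) _ (Subtype.prop _) hab ih

theorem connected_induce_iff_reachableIn :
    (G.induce s).Connected ↔ s.Nonempty ∧ ∀ u ∈ s, ∀ v ∈ s, ReachableIn G s u v := by
  rw [connected_iff]
  refine ⟨fun ⟨h, ⟨a⟩⟩ => ⟨⟨a, a.2⟩, fun u hu v hv => ⟨hu, hv, h _ _⟩⟩,
    fun ⟨⟨a, ha⟩, h⟩ => ⟨fun u v => ?_, ⟨⟨a, ha⟩⟩⟩⟩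
  obtain ⟨_, _, huv⟩ := h u u.2 v v.2
  exact huv

theorem ReachableIn.exists_adj_boundary (h : ReachableIn G s u v) {T : Set V} (hu : u ∈ T)
    (hv : v ∉ T) : ∃ a ∈ s, ∃ b ∈ s, a ∈ T ∧ b ∉ T ∧ G.Adj a b := by
  obtain ⟨_, _, ⟨p⟩⟩ := h
  obtain ⟨d, -, hd₁, hd₂⟩ := p.exists_boundary_dart (Subtype.val ⁻¹' T) hu hv
  exact ⟨_, d.fst.2, _, d.snd.2, hd₁, hd₂, d.adj⟩

theorem connected_induce_of_map (hs : (G.induce s).Connected) {s' : Set V'} (f : V → V')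
    (hf : ∀ v ∈ s, f v ∈ s')
    (hadj : ∀ u ∈ s, ∀ v ∈ s, G.Adj u v → ReachableIn G' s' (f u) (f v))
    (hcover : ∀ v' ∈ s', ∃ v ∈ s, ReachableIn G' s' v' (f v)) :
    (G'.induce s').Connected := by
  obtain ⟨a, ha⟩ := nonempty_subtype.mp hs.nonempty
  refine connected_induce_iff_reachableIn.mpr ⟨⟨f a, hf a ha⟩, fun u' hu' v' hv' => ?_⟩
  obtain ⟨u, hu, hu'u⟩ := hcover u' hu'
  obtain ⟨v, hv, hv'v⟩ := hcover v' hv'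
  have huv : ReachableIn G' s' (f u) (f v) :=
    (ReachableIn.of_connected hs hu hv).induction
      (P := fun a b => ReachableIn G' s' (f a) (f b)) (fun a ha => .refl (hf a ha))
      fun a ha b hb _ _ hab hbc => (hadj a ha b hb hab).trans hbc
  exact hu'u.trans (huv.trans hv'v.symm)

theorem connected_induce_of_isChain {l : List V} (hl : l.IsChain G.Adj) (hne : l ≠ []) :
    (G.induce {v | v ∈ l}).Connected := by
  have h := (Walk.ofSupport l hne hl).connected_induce_support
  rwa [Walk.support_ofSupport] at h

end Connectivity

section MinorModels

variable {V V' W : Type*} {H : SimpleGraph W} {G : SimpleGraph V} {G' : SimpleGraph V'}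

structure IsMinorModel (H : SimpleGraph W) (G : SimpleGraph V) (B : W → Set V) : Prop where
  connected : ∀ w, (G.induce (B w)).Connected
  disjoint : ∀ w₁ w₂, w₁ ≠ w₂ → Disjoint (B w₁) (B w₂)
  exists_adj : ∀ w₁ w₂, H.Adj w₁ w₂ → ∃ v₁ ∈ B w₁, ∃ v₂ ∈ B w₂, G.Adj v₁ v₂

theorem isMinor_iff_exists_isMinorModel : IsMinor H G ↔ ∃ B, IsMinorModel H G B :=
  ⟨fun ⟨B, h₁, h₂, h₃⟩ => ⟨B, h₁, h₂, h₃⟩, fun ⟨_, h⟩ => ⟨_, h.1, h.2, h.3⟩⟩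

variable {B : W → Set V}

theorem IsMinorModel.nonempty (hB : IsMinorModel H G B) (w : W) : (B w).Nonempty :=
  nonempty_subtype.mp (hB.connected w).nonempty

theorem IsMinorModel.subset_support (hB : IsMinorModel H G B) (hH : ∀ w, ∃ w', H.Adj w w')
    (w : W) : B w ⊆ G.support := by
  intro v hv
  obtain ⟨w', hww'⟩ := hH w
  obtain ⟨v₁, hv₁, v₂, -, hv₁₂⟩ := hB.exists_adj w w' hww'
  by_cases hvv₁ : v = v₁
  · exact hvv₁ ▸ ⟨v₂, hv₁₂⟩
  obtain ⟨p⟩ := (hB.connected w).preconnected ⟨v, hv⟩ ⟨v₁, hv₁⟩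
  cases p with
  | nil => exact absurd rfl hvv₁
  | cons h _ => exact ⟨_, h⟩

theorem IsMinorModel.bind {S : Set V} {F : V → Set V'} (hB : IsMinorModel H G B)
    (hBS : ∀ w, B w ⊆ S) (hF : IsMinorModel (G.induce S) G' fun v => F v) :
    IsMinorModel H G' fun w => ⋃ v ∈ B w, F v := by
  have hFconn : ∀ v ∈ S, ∀ a ∈ F v, ∀ b ∈ F v, ReachableIn G' (F v) a b :=
    fun v hv _ ha _ hb => .of_connected (hF.connected ⟨v, hv⟩) ha hb
  have hFsub : ∀ w, ∀ v ∈ B w, F v ⊆ ⋃ v ∈ B w, F v := fun _ _ hv =>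
    Set.subset_biUnion_of_mem hv
  refine ⟨fun w => connected_induce_iff_reachableIn.mpr ⟨?_, ?_⟩, fun w₁ w₂ hne => ?_, ?_⟩
  · obtain ⟨v, hv⟩ := hB.nonempty w
    obtain ⟨a, ha⟩ := hF.nonempty ⟨v, hBS w hv⟩
    exact ⟨a, Set.mem_biUnion hv ha⟩
  · have key : ∀ u v, ReachableIn G (B w) u v →
        ∀ a ∈ F u, ∀ b ∈ F v, ReachableIn G' (⋃ v ∈ B w, F v) a b := by
      refine fun u v huv => huv.induction (P := fun u v =>
          ∀ a ∈ F u, ∀ b ∈ F v, ReachableIn G' (⋃ v ∈ B w, F v) a b)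
        (fun c hc a ha b hb => (hFconn c (hBS w hc) a ha b hb).mono (hFsub w c hc))
        fun c hc d hd _ _ hcd hde a ha b hb => ?_
      obtain ⟨c', hc', d', hd', hcd'⟩ :=
        hF.exists_adj ⟨c, hBS w hc⟩ ⟨d, hBS w hd⟩ (induce_adj.mpr hcd)
      exact ((hFconn c (hBS w hc) a ha c' hc').mono (hFsub w c hc)).trans
        ((ReachableIn.of_adj hcd' (hFsub w c hc hc') (hFsub w d hd hd')).trans
          (hde d' hd' b hb))
    simp only [Set.mem_iUnion]
    rintro a ⟨u, hu, ha⟩ b ⟨v, hv, hb⟩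
    exact key u v (.of_connected (hB.connected w) hu hv) a ha b hb
  · simp only [Set.disjoint_left, Set.mem_iUnion]
    rintro a ⟨u, hu, hau⟩ ⟨v, hv, hav⟩
    have huv : u ≠ v := fun h => Set.disjoint_left.mp (hB.disjoint w₁ w₂ hne) hu (h ▸ hv)
    exact Set.disjoint_left.mp (hF.disjoint ⟨u, hBS w₁ hu⟩ ⟨v, hBS w₂ hv⟩
      fun h => huv (congrArg Subtype.val h)) hau hav
  · intro w₁ w₂ hw
    obtain ⟨u, hu, v, hv, huv⟩ := hB.exists_adj w₁ w₂ hw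
    obtain ⟨a, ha, b, hb, hab⟩ :=
      hF.exists_adj ⟨u, hBS w₁ hu⟩ ⟨v, hBS w₂ hv⟩ (induce_adj.mpr huv)
    exact ⟨a, hFsub w₁ u hu ha, b, hFsub w₂ v hv hb, hab⟩

end MinorModels

theorem completeBipartiteGraph_exists_adj {t : ℕ} (ht : 0 < t) (w : Fin 2 ⊕ Fin t) :
    ∃ w', (completeBipartiteGraph (Fin 2) (Fin t)).Adj w w' := by
  rcases w with i | j
  exacts [⟨.inr ⟨0, ht⟩, by simp⟩, ⟨.inl 0, by simp⟩]

section NoCrossing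

variable {V : Type*} {F : SimpleGraph V} {pos : V → ℕ} {A B : Set V}

def NoCrossingEdges (F : SimpleGraph V) (pos : V → ℕ) : Prop :=
  ∀ ⦃a b c d⦄, F.Adj a c → F.Adj b d → pos a < pos b → pos b < pos c → pos c < pos d → False

theorem ReachableIn.exists_adj_across {a a' : V} {p : ℕ} (h : ReachableIn F A a a')
    (ha : pos a < p) (ha' : p < pos a') (hp : ∀ v ∈ A, pos v ≠ p) :
    ∃ e ∈ A, ∃ f ∈ A, F.Adj e f ∧ pos e < p ∧ p < pos f := by
  obtain ⟨e, he, f, hf, hep, hfp, hef⟩ :=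
    h.exists_adj_boundary (T := {v | pos v < p}) ha (not_lt.mpr ha'.le)
  exact ⟨e, he, f, hf, hef, hep, lt_of_le_of_ne (not_lt.mp hfp) (hp f hf).symm⟩

namespace NoCrossingEdges

variable (hF : NoCrossingEdges F pos)
include hF

/-- An edge of `A` leaving the interval between `e` and `f` would cross `ef`. -/
theorem forall_mem_Ioo {e f a : V} (hef : F.Adj e f) (hA : (F.induce A).Connected)
    (hAef : ∀ v ∈ A, pos v ≠ pos e ∧ pos v ≠ pos f) (ha : a ∈ A) (hea : pos e < pos a)
    (haf : pos a < pos f) : ∀ v ∈ A, pos e < pos v ∧ pos v < pos f := by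
  intro v hv
  by_contra hout
  obtain ⟨b, -, c, hc, ⟨heb, hbf⟩, hcout, hbc⟩ :=
    (ReachableIn.of_connected hA ha hv).exists_adj_boundary
      (T := {v | pos e < pos v ∧ pos v < pos f}) ⟨hea, haf⟩ hout
  obtain ⟨hce, hcf⟩ := hAef c hc
  rcases lt_or_gt_of_ne hce with hce | hce
  · exact hF hbc.symm hef hce heb hbf
  · exact hF hef hbc heb hbf (lt_of_le_of_ne (not_lt.mp fun h => hcout ⟨hce, h⟩) hcf.symm)

/-- `A` jumps over `b` by an edge `ef` and `B` jumps over `a'` by an edge `gk`; then `B` lies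
between `e` and `f` and `A` between `g` and `k`, which is impossible. -/
theorem not_interleaved (hA : (F.induce A).Connected) (hB : (F.induce B).Connected)
    (hAB : ∀ a ∈ A, ∀ b ∈ B, pos a ≠ pos b) {a a' b b' : V} (ha : a ∈ A) (ha' : a' ∈ A)
    (hb : b ∈ B) (hb' : b' ∈ B) (h₁ : pos a < pos b) (h₂ : pos b < pos a')
    (h₃ : pos a' < pos b') : False := by
  obtain ⟨e, he, f, hf, hef, heb, hbf⟩ :=
    (ReachableIn.of_connected hA ha ha').exists_adj_across h₁ h₂ fun v hv => hAB v hv b hb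
  obtain ⟨g, hg, k, hk, hgk, hga, hak⟩ :=
    (ReachableIn.of_connected hB hb hb').exists_adj_across h₂ h₃
      fun v hv h => hAB a' ha' v hv h.symm
  have hBef := hF.forall_mem_Ioo hef hB
    (fun v hv => ⟨(hAB e he v hv).symm, (hAB f hf v hv).symm⟩) hb heb hbf
  have hAgk := hF.forall_mem_Ioo hgk hA (fun v hv => ⟨hAB v hv g hg, hAB v hv k hk⟩) ha' hga hak
  exact absurd (hBef g hg).1 (not_lt.mpr (hAgk e he).1.le)

theorem mem_Ioo_of_mem_Ioo (hA : (F.induce A).Connected) (hB : (F.induce B).Connected)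
    (hAB : ∀ a ∈ A, ∀ b ∈ B, pos a ≠ pos b) {a a' b b' : V} (ha : a ∈ A) (ha' : a' ∈ A)
    (hb : b ∈ B) (hb' : b' ∈ B) (h₁ : pos a < pos b) (h₂ : pos b < pos a') :
    pos a < pos b' ∧ pos b' < pos a' := by
  have := hAB a ha b' hb'
  have := hAB a' ha' b' hb'
  by_contra h
  rcases lt_or_gt_of_ne ‹pos a' ≠ pos b'› with h' | h'
  · exact hF.not_interleaved hA hB hAB ha ha' hb hb' h₁ h₂ h'
  · exact hF.not_interleaved hB hA (fun v hv w hw => (hAB w hw v hv).symm) hb' hb ha ha'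
      (by omega) h₁ h₂

theorem sup_edge {a b : V} (hab : ∀ ⦃c d⦄, F.Adj c d → pos a ≤ pos c ∧ pos c ≤ pos b) :
    NoCrossingEdges (F ⊔ edge a b) pos := by
  intro a' b' c' d' h₁ h₂ h₃ h₄ h₅
  simp only [sup_adj, edge_adj] at h₁ h₂
  rcases h₁ with h₁ | ⟨⟨rfl, rfl⟩ | ⟨rfl, rfl⟩, -⟩ <;>
    rcases h₂ with h₂ | ⟨⟨rfl, rfl⟩ | ⟨rfl, rfl⟩, -⟩
  · exact hF h₁ h₂ h₃ h₄ h₅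
  all_goals first
    | have := hab h₁; have := hab h₁.symm; omega
    | have := hab h₂; have := hab h₂.symm; omega
    | omega

end NoCrossingEdges

theorem OuterListing.noCrossingEdges [DecidableEq V] {l : List V} (hl : OuterListing F l)
    (hF : ∀ ⦃u v⦄, F.Adj u v → u ∈ l) : NoCrossingEdges F (l.idxOf ·) := by
  intro a b c d hac hbd h₁ h₂ h₃
  apply hl.2.2 _ _ _ _ h₁ h₂ h₃ (List.idxOf_lt_length_of_mem (hF hbd.symm))
  simp only [List.get_eq_getElem, List.getElem_idxOf]
  exact ⟨hac, hbd⟩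

/-- The combinatorial core of `K_{2,3}` not being outerplanar: two of the `Q j` lie on the
same side of the pair `P 0`, `P 1`, and they yield two disjoint edges that cross. -/
theorem false_of_K23_positions (P : Fin 2 → ℕ) (Q : Fin 3 → ℕ) (hP : P 0 ≠ P 1)
    (hQ : ∀ j k, j ≠ k → Q j ≠ Q k) (hPQ : ∀ i j, P i ≠ Q j)
    (hsep : ∀ i i' j k, i ≠ i' → j ≠ k → ∀ a ∈ [P i, Q j], ∀ a' ∈ [P i, Q j],
      ∀ b ∈ [P i', Q k], ∀ b' ∈ [P i', Q k], a < b → b < a' → a < b' ∧ b' < a') : False := by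
  obtain ⟨i, i', hii', hPi⟩ : ∃ i i', i ≠ i' ∧ P i < P i' := by
    rcases lt_or_gt_of_ne hP with h | h
    exacts [⟨0, 1, by decide, h⟩, ⟨1, 0, by decide, h⟩]
  obtain ⟨j, k, hjk, hside⟩ := Fintype.exists_ne_map_eq_of_card_lt
    (fun j => decide (P i < Q j ∧ Q j < P i')) (by simp)
  simp only [decide_eq_decide] at hside
  suffices ∀ j k, j ≠ k → (P i < Q j ∧ Q j < P i' ↔ P i < Q k ∧ Q k < P i') → Q j < Q k →
      False by
    rcases lt_or_gt_of_ne (hQ j k hjk) with h | h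
    exacts [this j k hjk hside h, this k j hjk.symm hside.symm h]
  intro j k hjk hside hQjk
  have := hPQ i j; have := hPQ i k; have := hPQ i' j; have := hPQ i' k
  have h₁ := hsep i i' k j hii' hjk.symm (P i) (by simp) (Q k) (by simp) (Q j) (by simp) (P i')
    (by simp)
  have h₂ := hsep i i' j k hii' hjk (Q j) (by simp) (P i) (by simp) (Q k) (by simp) (P i')
    (by simp)
  have h₃ := hsep i' i j k hii'.symm hjk (Q j) (by simp) (P i') (by simp) (P i) (by simp) (Q k)
    (by simp)
  have h₄ := hsep i i' j k hii' hjk (P i) (by simp) (Q j) (by simp) (P i') (by simp) (Q k)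
    (by simp)
  omega

theorem NoCrossingEdges.not_isMinorModel_K23 (hF : NoCrossingEdges F pos)
    {B : Fin 2 ⊕ Fin 3 → Set V} (hB : IsMinorModel (completeBipartiteGraph (Fin 2) (Fin 3)) F B)
    (hpos : Set.InjOn pos (⋃ w, B w)) : False := by
  have hdisj : ∀ w w', w ≠ w' → ∀ a ∈ B w, ∀ b ∈ B w', pos a ≠ pos b :=
    fun w w' h a ha b hb hab => Set.disjoint_left.mp (hB.disjoint w w' h) ha
      (hpos (Set.mem_iUnion_of_mem _ ha) (Set.mem_iUnion_of_mem _ hb) hab ▸ hb)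
  have hsep : ∀ i i' j k, i ≠ i' → j ≠ k → ∀ a ∈ B (.inl i) ∪ B (.inr j),
      ∀ a' ∈ B (.inl i) ∪ B (.inr j), ∀ b ∈ B (.inl i') ∪ B (.inr k),
      ∀ b' ∈ B (.inl i') ∪ B (.inr k), pos a < pos b → pos b < pos a' →
        pos a < pos b' ∧ pos b' < pos a' := by
    intro i i' j k hi hj
    have hC : ∀ i j, (F.induce (B (.inl i) ∪ B (.inr j))).Connected := fun i j => by
      obtain ⟨u, hu, v, hv, huv⟩ := hB.exists_adj (.inl i) (.inr j) (by simp)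
      exact connected_induce_union (hB.connected _).preconnected (hB.connected _).preconnected
        hu hv huv
    refine fun a ha a' ha' b hb b' hb' =>
      hF.mem_Ioo_of_mem_Ioo (hC i j) (hC i' k) ?_ ha ha' hb hb'
    rintro a (ha | ha) b (hb | hb) <;> exact hdisj _ _ (by simp [*]) a ha b hb
  choose p hp using fun i => hB.nonempty (.inl i)
  choose q hq using fun j => hB.nonempty (.inr j)
  have hmem : ∀ i j a, a ∈ [pos (p i), pos (q j)] →
      ∃ u ∈ B (.inl i) ∪ B (.inr j), pos u = a := by
    simp only [List.mem_cons, List.not_mem_nil, or_false]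
    rintro i j a (rfl | rfl)
    exacts [⟨_, .inl (hp i), rfl⟩, ⟨_, .inr (hq j), rfl⟩]
  refine false_of_K23_positions (fun i => pos (p i)) (fun j => pos (q j))
    (hdisj _ _ (by simp) _ (hp 0) _ (hp 1))
    (fun j k h => hdisj _ _ (by simpa using h) _ (hq j) _ (hq k))
    (fun i j => hdisj _ _ (by simp) _ (hp i) _ (hq j)) ?_
  intro i i' j k hi hj a ha a' ha' b hb b' hb'
  obtain ⟨u, hu, rfl⟩ := hmem i j a ha
  obtain ⟨u', hu', rfl⟩ := hmem i j a' ha'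
  obtain ⟨v, hv, rfl⟩ := hmem i' k b hb
  obtain ⟨v', hv', rfl⟩ := hmem i' k b' hb'
  exact hsep i i' j k hi hj u hu u' hu' v hv v' hv'

end NoCrossing

theorem mem_and_mem_of_disjoint {α : Type*} {s t : Set α} {a b : α} (hst : Disjoint s t)
    (hs : a ∈ s ∨ b ∈ s) (ht : a ∈ t ∨ b ∈ t) : a ∈ s ∧ b ∈ t ∨ b ∈ s ∧ a ∈ t := by
  rcases hs with hs | hs <;> rcases ht with ht | ht
  exacts [absurd ht (Set.disjoint_left.mp hst hs), .inl ⟨hs, ht⟩, .inr ⟨hs, ht⟩,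
    absurd ht (Set.disjoint_left.mp hst hs)]

theorem disjoint_diff_union {α W : Type*} {B : W → Set α} (hB : ∀ w₁ w₂, w₁ ≠ w₂ →
    Disjoint (B w₁) (B w₂)) {I : Set α} {z : α} (hz : ∀ w, z ∉ B w) {P : W → Prop}
    (hP : ∀ w₁ w₂, P w₁ → P w₂ → w₁ = w₂) {w₁ w₂ : W} (hw : w₁ ≠ w₂) :
    Disjoint (B w₁ \ I ∪ {v | v = z ∧ P w₁}) (B w₂ \ I ∪ {v | v = z ∧ P w₂}) := by
  rw [Set.disjoint_left]
  rintro v (⟨hv₁, -⟩ | ⟨hz₁, hP₁⟩) (⟨hv₂, -⟩ | ⟨hz₂, hP₂⟩)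
  exacts [Set.disjoint_left.mp (hB w₁ w₂ hw) hv₁ hv₂, hz _ (hz₂ ▸ hv₁), hz _ (hz₁ ▸ hv₂),
    hw (hP w₁ w₂ hP₁ hP₂)]

theorem mem_cons_append_of_mem {α : Type*} {x y v : α} {m : List α} (hv : v ∈ m) :
    v ∈ x :: (m ++ [y]) :=
  List.mem_cons_of_mem _ (List.mem_append_left _ hv)

theorem idxOf_cons_append_le {α : Type*} [DecidableEq α] {x y v : α} {m : List α}
    (hv : v ∈ x :: (m ++ [y])) : (x :: (m ++ [y])).idxOf v ≤ m.length + 1 := by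
  have := List.idxOf_lt_length_of_mem hv
  simp only [List.length_cons, List.length_append, List.length_nil] at this
  omega

theorem idxOf_ne_of_disjoint {α : Type*} [DecidableEq α] {l : List α} {s t : Set α}
    (hst : Disjoint s t) {a b : α} (ha : a ∈ s) (hal : a ∈ l) (hb : b ∈ t) :
    l.idxOf a ≠ l.idxOf b := fun h =>
  Set.disjoint_left.mp hst ha ((List.idxOf_inj hal).mp h ▸ hb)

theorem exists_eq_cons_append_singleton {α : Type*} {l : List α} {x y : α}
    (hx : l.head? = some x) (hy : l.getLast? = some y) (hl : 3 ≤ l.length) :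
    ∃ m, m ≠ [] ∧ l = x :: (m ++ [y]) := by
  obtain ⟨a, t, rfl⟩ :=
    List.exists_cons_of_ne_nil (List.ne_nil_of_length_pos (by omega : 0 < l.length))
  obtain rfl : a = x := by simpa using hx
  rcases List.eq_nil_or_concat t with rfl | ⟨m, b, rfl⟩
  · simp at hl
  rw [List.concat_eq_append, ← List.cons_append, List.getLast?_concat] at hy
  obtain rfl : b = y := by simpa using hy
  refine ⟨m, ?_, by simp⟩
  rintro rfl
  simp at hl

section PathReplacement

variable {U : Type*}

/-- `H ⊔ (edge z x ⊔ edge z y)` is the paper's `G` (with `H = G - z`) and `H ⊔ J` is its `G'`;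
`J` is listed along its outer path as `x :: (m ++ [y])`, so `m` lists the interior of `J`. -/
structure PathReplacement (H J : SimpleGraph U) (x y z : U) (m : List U) : Prop where
  outerListing : OuterListing J (x :: (m ++ [y]))
  mem_of_adj_J : ∀ ⦃u v⦄, J.Adj u v → u ∈ x :: (m ++ [y])
  not_mem_of_adj_H : ∀ ⦃u v⦄, H.Adj u v → u ∉ m
  not_adj_H : ∀ v, ¬ H.Adj z v
  not_mem : z ∉ x :: (m ++ [y])

namespace PathReplacement

variable {H J : SimpleGraph U} {x y z : U} {m : List U} (R : PathReplacement H J x y z m)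
include R

theorem distinct : x ≠ y ∧ x ∉ m ∧ y ∉ m ∧ z ≠ x ∧ z ≠ y ∧ z ∉ m := by
  have h := R.outerListing.1
  have hz := R.not_mem
  simp only [List.nodup_cons, List.mem_append, List.mem_cons, not_or,
    List.nodup_append] at h hz
  tauto

theorem adj_J_of_mem {u v : U} (h : (H ⊔ J).Adj u v) (hu : u ∈ m) : J.Adj u v :=
  h.resolve_left fun h => R.not_mem_of_adj_H h hu

theorem mem_of_adj_of_mem {u v : U} (h : (H ⊔ J).Adj u v) (hu : u ∈ m) :
    v = x ∨ v ∈ m ∨ v = y := by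
  simpa using R.mem_of_adj_J (R.adj_J_of_mem h hu).symm

theorem not_mem_support : z ∉ (H ⊔ J).support := by
  rintro ⟨v, hv | hv⟩
  exacts [R.not_adj_H v hv, R.not_mem (R.mem_of_adj_J hv)]

theorem isChain (hm : m ≠ []) :
    J.Adj x (m.head hm) ∧ J.Adj (m.getLast hm) y ∧ m.IsChain J.Adj := by
  have h : (x :: (m ++ [y])).IsChain J.Adj := R.outerListing.2.1
  obtain ⟨a, m, rfl⟩ := List.exists_cons_of_ne_nil hm
  rw [List.cons_append, List.isChain_cons_cons, ← List.cons_append, List.isChain_append] at h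
  obtain ⟨hxa, hm, -, hy⟩ := h
  exact ⟨hxa, hy _ (List.getLast?_eq_some_getLast (List.cons_ne_nil a m)) y rfl, hm⟩

theorem isMinorModel_update [DecidableEq U] (hm : m ≠ []) :
    IsMinorModel ((H ⊔ (edge z x ⊔ edge z y)).induce (H ⊔ (edge z x ⊔ edge z y)).support)
      (H ⊔ J) fun v => Function.update (fun u => ({u} : Set U)) z {u | u ∈ m} v := by
  obtain ⟨-, hxm, hym, hzx, hzy, -⟩ := R.distinct
  obtain ⟨hx, hy, hchain⟩ := R.isChain hm
  have hS : ∀ v ∈ (H ⊔ (edge z x ⊔ edge z y)).support, v ≠ z → v ∉ m := by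
    rintro v ⟨w, hvw | hvw⟩ hvz
    · exact R.not_mem_of_adj_H hvw
    · simp only [sup_adj, edge_adj] at hvw
      rcases hvw with ⟨⟨rfl, -⟩ | ⟨rfl, -⟩, -⟩ | ⟨⟨rfl, -⟩ | ⟨rfl, -⟩, -⟩ <;> tauto
  set F := Function.update (fun u => ({u} : Set U)) z {u | u ∈ m}
  have hFz : F z = {u | u ∈ m} := Function.update_self ..
  have hF : ∀ v, v ≠ z → F v = {v} := fun v hv => Function.update_of_ne hv ..
  refine ⟨fun ⟨v, _⟩ => ?_, fun ⟨u, hu⟩ ⟨v, hv⟩ huv => ?_, fun ⟨u, _⟩ ⟨v, _⟩ huv => ?_⟩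
  · show ((H ⊔ J).induce (F v)).Connected
    by_cases hv : v = z
    · rw [hv, hFz]
      exact connected_induce_of_isChain (List.IsChain.imp (fun _ _ h => Or.inr h) hchain) hm
    · rw [hF v hv]
      exact Connected.of_subsingleton
  · have huv : u ≠ v := fun h => huv (Subtype.ext h)
    show Disjoint (F u) (F v)
    by_cases hu' : u = z <;> by_cases hv' : v = z
    · exact absurd (hu'.trans hv'.symm) huv
    · rw [hu', hFz, hF v hv']
      exact Set.disjoint_singleton_right.mpr (hS v hv hv')
    · rw [hv', hFz, hF u hu']
      exact Set.disjoint_singleton_left.mpr (hS u hu hu')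
    · rw [hF u hu', hF v hv']
      exact Set.disjoint_singleton.mpr huv
  · change (H ⊔ _).Adj u v at huv
    show ∃ a ∈ F u, ∃ b ∈ F v, (H ⊔ J).Adj a b
    rcases huv with huv | huv
    · rw [hF u fun h => R.not_adj_H _ (h ▸ huv), hF v fun h => R.not_adj_H _ (h ▸ huv.symm)]
      exact ⟨u, rfl, v, rfl, .inl huv⟩
    simp only [sup_adj, edge_adj] at huv
    rcases huv with ⟨⟨rfl, rfl⟩ | ⟨rfl, rfl⟩, -⟩ | ⟨⟨rfl, rfl⟩ | ⟨rfl, rfl⟩, -⟩ <;>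
      simp only [hFz, hF _ hzx.symm, hF _ hzy.symm, Set.mem_ofPred_eq, Set.mem_singleton_iff,
        exists_eq_left]
    exacts [⟨_, List.head_mem hm, .inr hx.symm⟩, ⟨_, List.head_mem hm, .inr hx⟩,
      ⟨_, List.getLast_mem hm, .inr hy⟩, ⟨_, List.getLast_mem hm, .inr hy.symm⟩]

theorem isMinor_sup_of_isMinor_sup_path (hm : m ≠ []) {W : Type*} {K : SimpleGraph W}
    (hK : ∀ w, ∃ w', K.Adj w w') (h : IsMinor K (H ⊔ (edge z x ⊔ edge z y))) :
    IsMinor K (H ⊔ J) := by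
  classical
  obtain ⟨B, hB⟩ := isMinor_iff_exists_isMinorModel.mp h
  exact isMinor_iff_exists_isMinorModel.mpr
    ⟨_, hB.bind (hB.subset_support hK) (R.isMinorModel_update hm)⟩

theorem mem_or_mem_of_reachableIn {s : Set U} {u v : U} (h : ReachableIn (H ⊔ J) s u v)
    (hu : u ∈ m) (hv : v ∉ m) : x ∈ s ∨ y ∈ s := by
  obtain ⟨a, -, b, hb, ha, hbm, hab⟩ := h.exists_adj_boundary (T := {v | v ∈ m}) hu hv
  rcases R.mem_of_adj_of_mem hab ha with rfl | hbm' | rfl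
  exacts [.inl hb, absurd hbm' hbm, .inr hb]

theorem mem_or_mem_of_connected {s : Set U} (hs : ((H ⊔ J).induce s).Connected)
    (hsm : ¬ s ⊆ {v | v ∈ m}) {u : U} (hu : u ∈ s) (huJ : u ∈ x :: (m ++ [y])) :
    x ∈ s ∨ y ∈ s := by
  rcases (by simpa using huJ : u = x ∨ u ∈ m ∨ u = y) with rfl | hum | rfl
  · exact .inl hu
  · obtain ⟨v, hv, hvm⟩ := Set.not_subset.mp hsm
    exact R.mem_or_mem_of_reachableIn (.of_connected hs hu hv) hum hvm
  · exact .inr hu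

theorem reachableIn_sup_edge {s : Set U} {a b : U} (ha : a = x ∨ a = y) (hb : b = x ∨ b = y)
    (has : a ∈ s) (hbs : b ∈ s) : ReachableIn (J ⊔ edge x y) s a b := by
  rcases ha with rfl | rfl <;> rcases hb with rfl | rfl
  · exact .refl has
  · exact .of_adj (.inr (by simp [edge_adj, R.distinct.1])) has hbs
  · exact .of_adj (.inr (by simp [edge_adj, R.distinct.1.symm])) has hbs
  · exact .refl has

theorem reachableIn_sup_path {s : Set U} {a b : U} (ha : a = x ∨ a = y) (hb : b = x ∨ b = y)
    (has : a ∈ s) (hbs : b ∈ s) (hz : a ≠ b → z ∈ s) :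
    ReachableIn (H ⊔ (edge z x ⊔ edge z y)) s a b := by
  obtain ⟨-, -, -, hzx, hzy, -⟩ := R.distinct
  have hx : (H ⊔ (edge z x ⊔ edge z y)).Adj z x := .inr (.inl (by simp [edge_adj, hzx]))
  have hy : (H ⊔ (edge z x ⊔ edge z y)).Adj z y := .inr (.inr (by simp [edge_adj, hzy]))
  by_cases hab : a = b
  · exact hab ▸ .refl has
  have hz := hz hab
  rcases ha with rfl | rfl <;> rcases hb with rfl | rfl
  exacts [absurd rfl hab, (ReachableIn.of_adj hx.symm has hz).trans (.of_adj hy hz hbs),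
    (ReachableIn.of_adj hy.symm has hz).trans (.of_adj hx hz hbs), absurd rfl hab]

/-- The part of `s` outside `J` meets `J` only in `x` and `y`, so it can be replaced by the
edge `xy`. -/
theorem connected_induce_inter {s : Set U} (hs : ((H ⊔ J).induce s).Connected)
    (hne : (s ∩ {v | v ∈ x :: (m ++ [y])}).Nonempty) :
    ((J ⊔ edge x y).induce (s ∩ {v | v ∈ x :: (m ++ [y])})).Connected := by
  classical
  set L := {v | v ∈ x :: (m ++ [y])}
  obtain ⟨c, ⟨hcs, hcL⟩, hc⟩ : ∃ c ∈ s ∩ L, ∀ v ∈ s, v ∉ L → c = x ∨ c = y := by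
    by_cases hsL : s ⊆ L
    · exact ⟨_, hne.some_mem, fun v hv hvL => absurd (hsL hv) hvL⟩
    obtain ⟨v, hvs, hvL⟩ := Set.not_subset.mp hsL
    obtain ⟨a, has, haL⟩ := hne
    obtain ⟨a', ha's, b, -, ha'L, hbL, hab⟩ :=
      (ReachableIn.of_connected hs has hvs).exists_adj_boundary haL hvL
    have hab : H.Adj a' b := hab.resolve_right fun h => hbL (R.mem_of_adj_J h.symm)
    have ha' : a' = x ∨ a' = y := by simpa [R.not_mem_of_adj_H hab, L] using ha'L
    exact ⟨a', ⟨ha's, ha'L⟩, fun _ _ _ => ha'⟩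
  let φ : U → U := fun v => if v ∈ L then v else c
  have hφ : ∀ v ∈ s, φ v ∈ s ∩ L := fun v hv => by
    by_cases hvL : v ∈ L <;> simp [φ, hvL, hv, hcs, hcL]
  have hφxy : ∀ v ∈ s, v ∉ m → φ v = x ∨ φ v = y := by
    intro v hv hvm
    by_cases hvL : v ∈ L
    · rw [show φ v = v from if_pos hvL]
      simpa [hvm, L] using hvL
    · simpa [φ, hvL] using hc v hv hvL
  refine connected_induce_of_map hs φ hφ (fun u hu v hv huv => ?_)
    fun v hv => ⟨v, hv.1, by simpa [φ, hv.2] using ReachableIn.refl hv⟩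
  rcases huv with huv | huv
  · exact R.reachableIn_sup_edge (hφxy u hu (R.not_mem_of_adj_H huv))
      (hφxy v hv (R.not_mem_of_adj_H huv.symm)) (hφ u hu) (hφ v hv)
  · have huL := R.mem_of_adj_J huv
    have hvL := R.mem_of_adj_J huv.symm
    rw [show φ u = u from if_pos huL, show φ v = v from if_pos hvL]
    exact .of_adj (.inl huv) ⟨hu, huL⟩ ⟨hv, hvL⟩

/-- Each part of `s` inside `m` hangs off `x` or `y`, and an `xy`-connection through `J` is
rerouted through `z`. -/
theorem connected_induce_diff {s Z : Set U} (hs : ((H ⊔ J).induce s).Connected)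
    (hsm : ¬ s ⊆ {v | v ∈ m}) (hZ : Z ⊆ {z}) (hxy : x ∈ s → y ∈ s → z ∈ Z)
    (hzZ : z ∈ Z → x ∈ s ∨ y ∈ s) :
    ((H ⊔ (edge z x ⊔ edge z y)).induce (s \ {v | v ∈ m} ∪ Z)).Connected := by
  classical
  obtain ⟨-, hxm, hym, hzx, hzy, -⟩ := R.distinct
  obtain ⟨c, hcs, hcm, hc⟩ : ∃ c ∈ s, c ∉ m ∧ ∀ v ∈ s, v ∈ m → c = x ∨ c = y := by
    by_cases h : ∃ v ∈ s, v ∈ m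
    · obtain ⟨v, hv, hvm⟩ := h
      rcases R.mem_or_mem_of_connected hs hsm hv (mem_cons_append_of_mem hvm) with h | h
      exacts [⟨x, h, hxm, fun _ _ _ => .inl rfl⟩, ⟨y, h, hym, fun _ _ _ => .inr rfl⟩]
    · obtain ⟨v, hv, hvm⟩ := Set.not_subset.mp hsm
      exact ⟨v, hv, hvm, fun w hw hwm => absurd ⟨w, hw, hwm⟩ h⟩
  let φ : U → U := fun v => if v ∈ m then c else v
  have hφ : ∀ v ∈ s, φ v ∈ s \ {v | v ∈ m} := fun v hv => by
    by_cases hvm : v ∈ m <;> simp [φ, hvm, hv, hcs, hcm]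
  have hφxy : ∀ v ∈ s, v ∈ x :: (m ++ [y]) → φ v = x ∨ φ v = y := by
    intro v hv hvJ
    by_cases hvm : v ∈ m
    · simpa [φ, hvm] using hc v hv hvm
    · simpa [φ, hvm] using hvJ
  refine connected_induce_of_map hs φ (fun v hv => .inl (hφ v hv)) (fun u hu v hv huv => ?_) ?_
  · rcases huv with huv | huv
    · have hum := R.not_mem_of_adj_H huv
      have hvm := R.not_mem_of_adj_H huv.symm
      rw [show φ u = u from if_neg hum, show φ v = v from if_neg hvm]
      exact .of_adj (.inl huv) (.inl ⟨hu, hum⟩) (.inl ⟨hv, hvm⟩)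
    · have hu' := hφxy u hu (R.mem_of_adj_J huv)
      have hv' := hφxy v hv (R.mem_of_adj_J huv.symm)
      have hxys : ∀ a ∈ s, ∀ b ∈ s, (a = x ∨ a = y) → (b = x ∨ b = y) → a ≠ b → z ∈ Z := by
        rintro a ha b hb (rfl | rfl) (rfl | rfl) hab
        exacts [absurd rfl hab, hxy ha hb, hxy hb ha, absurd rfl hab]
      exact R.reachableIn_sup_path hu' hv' (.inl (hφ u hu)) (.inl (hφ v hv))
        fun hne => .inr (hxys _ (hφ u hu).1 _ (hφ v hv).1 hu' hv' hne)
  · rintro v (⟨hv, hvm⟩ | hvZ)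
    · refine ⟨v, hv, ?_⟩
      rw [show φ v = v from if_neg hvm]
      exact .refl (.inl ⟨hv, hvm⟩)
    obtain rfl := hZ hvZ
    have hx : (H ⊔ (edge v x ⊔ edge v y)).Adj v x := .inr (.inl (by simp [edge_adj, hzx]))
    have hy : (H ⊔ (edge v x ⊔ edge v y)).Adj v y := .inr (.inr (by simp [edge_adj, hzy]))
    rcases hzZ hvZ with h | h
    · exact ⟨x, h, by simpa [φ, hxm] using ReachableIn.of_adj hx (.inr hvZ) (.inl ⟨h, hxm⟩)⟩
    · exact ⟨y, h, by simpa [φ, hym] using ReachableIn.of_adj hy (.inr hvZ) (.inl ⟨h, hym⟩)⟩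

section Positions

variable [DecidableEq U]

theorem idxOf_y : (x :: (m ++ [y])).idxOf y = m.length + 1 := by
  rw [← List.cons_append,
    List.idxOf_append_of_notMem (by simpa using ⟨R.distinct.1.symm, R.distinct.2.2.1⟩)]
  simp

theorem noCrossingEdges : NoCrossingEdges (J ⊔ edge x y) (x :: (m ++ [y])).idxOf :=
  (R.outerListing.noCrossingEdges R.mem_of_adj_J).sup_edge fun _ _ hcd =>
    ⟨by simp, R.idxOf_y ▸ idxOf_cons_append_le (R.mem_of_adj_J hcd)⟩

theorem idxOf_mem_Ioo {v : U} (hv : v ∈ m) :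
    (x :: (m ++ [y])).idxOf x < (x :: (m ++ [y])).idxOf v ∧
      (x :: (m ++ [y])).idxOf v < (x :: (m ++ [y])).idxOf y := by
  obtain ⟨-, hxm, hym, -⟩ := R.distinct
  have hvJ : v ∈ x :: (m ++ [y]) := mem_cons_append_of_mem hv
  have hvx : (x :: (m ++ [y])).idxOf v ≠ (x :: (m ++ [y])).idxOf x :=
    fun h => hxm ((List.idxOf_inj hvJ).mp h ▸ hv)
  have hvy : (x :: (m ++ [y])).idxOf v ≠ (x :: (m ++ [y])).idxOf y :=
    fun h => hym ((List.idxOf_inj hvJ).mp h ▸ hv)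
  have := idxOf_cons_append_le hvJ
  simp only [R.idxOf_y, List.idxOf_cons_self] at hvx hvy ⊢
  omega

end Positions

variable {W : Type*} {K : SimpleGraph W} {B : W → Set U}

theorem exists_adj_inter_of_subset (hB : IsMinorModel K (H ⊔ J) B) {w w' : W}
    (hw : B w ⊆ {v | v ∈ m}) (hww' : K.Adj w w') :
    ∃ u ∈ B w ∩ {v | v ∈ x :: (m ++ [y])}, ∃ v ∈ B w' ∩ {v | v ∈ x :: (m ++ [y])},
      (J ⊔ edge x y).Adj u v := by
  obtain ⟨u, hu, v, hv, huv⟩ := hB.exists_adj w w' hww'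
  have hJ := R.adj_J_of_mem huv (hw hu)
  exact ⟨u, ⟨hu, R.mem_of_adj_J hJ⟩, v, ⟨hv, R.mem_of_adj_J hJ.symm⟩, .inl hJ⟩

theorem exists_adj_inter (hB : IsMinorModel K (H ⊔ J) B) {w w' : W} (hww' : K.Adj w w')
    (hw : (B w ∩ {v | v ∈ x :: (m ++ [y])}).Nonempty)
    (hw' : (B w' ∩ {v | v ∈ x :: (m ++ [y])}).Nonempty) :
    ∃ u ∈ B w ∩ {v | v ∈ x :: (m ++ [y])}, ∃ v ∈ B w' ∩ {v | v ∈ x :: (m ++ [y])},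
      (J ⊔ edge x y).Adj u v := by
  by_cases h : B w ⊆ {v | v ∈ m}
  · exact R.exists_adj_inter_of_subset hB h hww'
  by_cases h' : B w' ⊆ {v | v ∈ m}
  · obtain ⟨u, hu, v, hv, huv⟩ := R.exists_adj_inter_of_subset hB h' hww'.symm
    exact ⟨v, hv, u, hu, huv.symm⟩
  obtain ⟨a, ha, haJ⟩ := hw
  obtain ⟨b, hb, hbJ⟩ := hw'
  have hxJ : x ∈ x :: (m ++ [y]) := List.mem_cons_self
  have hyJ : y ∈ x :: (m ++ [y]) := by simp
  rcases mem_and_mem_of_disjoint (hB.disjoint w w' hww'.ne)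
    (R.mem_or_mem_of_connected (hB.connected w) h ha haJ)
    (R.mem_or_mem_of_connected (hB.connected w') h' hb hbJ) with ⟨hx, hy⟩ | ⟨hy, hx⟩
  · exact ⟨x, ⟨hx, hxJ⟩, y, ⟨hy, hyJ⟩, .inr (by simp [edge_adj, R.distinct.1])⟩
  · exact ⟨y, ⟨hy, hyJ⟩, x, ⟨hx, hxJ⟩, .inr (by simp [edge_adj, R.distinct.1.symm])⟩

theorem exists_adj_sdiff_or (hB : IsMinorModel K (H ⊔ J) B) {w₁ w₂ : W} (hw : K.Adj w₁ w₂)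
    (h₁ : ¬ B w₁ ⊆ {v | v ∈ m}) (h₂ : ¬ B w₂ ⊆ {v | v ∈ m}) :
    (∃ u ∈ B w₁ \ {v | v ∈ m}, ∃ v ∈ B w₂ \ {v | v ∈ m}, H.Adj u v) ∨
      (x ∈ B w₁ ∨ y ∈ B w₁) ∧ (x ∈ B w₂ ∨ y ∈ B w₂) := by
  obtain ⟨u, hu, v, hv, huv | huv⟩ := hB.exists_adj w₁ w₂ hw
  · exact .inl ⟨u, ⟨hu, R.not_mem_of_adj_H huv⟩, v, ⟨hv, R.not_mem_of_adj_H huv.symm⟩, huv⟩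
  · exact .inr ⟨R.mem_or_mem_of_connected (hB.connected w₁) h₁ hu (R.mem_of_adj_J huv),
      R.mem_or_mem_of_connected (hB.connected w₂) h₂ hv (R.mem_of_adj_J huv.symm)⟩

theorem connected_induce_union_of_subset (hB : IsMinorModel K (H ⊔ J) B) {w w' : W}
    (hw : B w ⊆ {v | v ∈ m}) (hww' : K.Adj w w') :
    ((J ⊔ edge x y).induce (B w ∪ B w' ∩ {v | v ∈ x :: (m ++ [y])})).Connected := by
  obtain ⟨u, hu, v, hv, huv⟩ := R.exists_adj_inter_of_subset hB hw hww'
  have hwJ : B w ∩ {v | v ∈ x :: (m ++ [y])} = B w :=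
    Set.inter_eq_left.mpr fun v hv => mem_cons_append_of_mem (hw hv)
  have hcw := R.connected_induce_inter (hB.connected w) ⟨u, hu⟩
  rw [hwJ] at hcw
  exact connected_induce_union hcw.preconnected
    (R.connected_induce_inter (hB.connected w') ⟨v, hv⟩).preconnected hu.1 hv huv

/-- Since `x` and `y` are the ends of the outer path, the connected sets `B w₂ ∪ (B a ∩ J)` and
`B w₁ ∪ (B b ∩ J)` of `J ⊔ xy` would interleave. -/
theorem false_of_subset_of_subset (hB : IsMinorModel K (H ⊔ J) B) {a b w₁ w₂ : W}
    (hab : a ≠ b) (hw : w₁ ≠ w₂) (ha : x ∈ B a) (hb : y ∈ B b) (h₁ : B w₁ ⊆ {v | v ∈ m})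
    (h₂ : B w₂ ⊆ {v | v ∈ m}) (ha₁ : K.Adj w₁ a) (ha₂ : K.Adj w₂ a) (hb₁ : K.Adj w₁ b)
    (hb₂ : K.Adj w₂ b) : False := by
  classical
  obtain ⟨s₁, hs₁⟩ := hB.nonempty w₁
  obtain ⟨s₂, hs₂⟩ := hB.nonempty w₂
  set pos := (x :: (m ++ [y])).idxOf
  wlog hs : pos s₁ < pos s₂ generalizing w₁ w₂ s₁ s₂
  · refine this hw.symm h₂ h₁ ha₂ ha₁ hb₂ hb₁ s₂ hs₂ s₁ hs₁ (lt_of_le_of_ne (not_lt.mp hs) ?_)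
    exact idxOf_ne_of_disjoint (hB.disjoint w₂ w₁ hw.symm) hs₂ (mem_cons_append_of_mem (h₂ hs₂))
      hs₁
  have hdisj : ∀ u ∈ B w₂ ∪ B a ∩ {v | v ∈ x :: (m ++ [y])},
      ∀ v ∈ B w₁ ∪ B b ∩ {v | v ∈ x :: (m ++ [y])}, pos u ≠ pos v := by
    have : ∀ u ∈ B w₂ ∪ B a, u ∈ x :: (m ++ [y]) → ∀ v ∈ B w₁ ∪ B b, pos u ≠ pos v := by
      rintro u (hu | hu) huJ v (hv | hv) <;>
        refine idxOf_ne_of_disjoint (hB.disjoint _ _ ?_) hu huJ hv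
      exacts [hw.symm, hb₂.ne, ha₁.ne.symm, hab]
    rintro u (hu | ⟨hu, huJ⟩) v (hv | ⟨hv, -⟩)
    all_goals first
      | exact this u (.inr hu) huJ v (.inl hv) | exact this u (.inr hu) huJ v (.inr hv)
      | exact this u (.inl hu) (mem_cons_append_of_mem (h₂ hu)) v (.inl hv)
      | exact this u (.inl hu) (mem_cons_append_of_mem (h₂ hu)) v (.inr hv)
  have := R.noCrossingEdges.mem_Ioo_of_mem_Ioo (R.connected_induce_union_of_subset hB h₂ ha₂)
    (R.connected_induce_union_of_subset hB h₁ hb₁) hdisj (.inr ⟨ha, List.mem_cons_self⟩)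
    (.inl hs₂) (.inl hs₁) (.inr ⟨hb, by simp⟩) (R.idxOf_mem_Ioo (h₁ hs₁)).1 hs
  exact absurd this.2 (not_lt.mpr (R.idxOf_mem_Ioo (h₂ hs₂)).2.le)

theorem false_of_inl_subset {t : ℕ} (ht : 3 ≤ t) {B : Fin 2 ⊕ Fin t → Set U}
    (hB : IsMinorModel (completeBipartiteGraph (Fin 2) (Fin t)) (H ⊔ J) B) {i : Fin 2}
    (hi : B (.inl i) ⊆ {v | v ∈ m})
    (hne : ∀ i', (B (.inl i') ∩ {v | v ∈ x :: (m ++ [y])}).Nonempty) : False := by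
  classical
  set e : Fin 2 ⊕ Fin 3 → Fin 2 ⊕ Fin t := Sum.map id (Fin.castLE ht)
  have he : Function.Injective e := Sum.map_injective.mpr ⟨fun _ _ => id, Fin.castLE_injective ht⟩
  have hne' : ∀ w, (B (e w) ∩ {v | v ∈ x :: (m ++ [y])}).Nonempty := by
    rintro (i' | j)
    · exact hne i'
    · obtain ⟨-, -, v, hv, -⟩ :=
        R.exists_adj_inter_of_subset hB hi (w' := e (.inr j)) (by simp [e])
      exact ⟨v, hv⟩
  refine R.noCrossingEdges.not_isMinorModel_K23 (B := fun w => B (e w) ∩ {v | v ∈ x :: (m ++ [y])})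
    ⟨fun w => R.connected_induce_inter (hB.connected _) (hne' w), fun w w' hww' =>
      (hB.disjoint _ _ (he.ne hww')).mono Set.inter_subset_left Set.inter_subset_left,
      fun w w' hww' => R.exists_adj_inter hB ?_ (hne' w) (hne' w')⟩ ?_
  · rcases w with _ | _ <;> rcases w' with _ | _ <;> simp_all [e]
  · intro a ha b _ hab
    obtain ⟨-, -, haJ⟩ := Set.mem_iUnion.mp ha
    exact (List.idxOf_inj haJ).mp hab

theorem eq_of_subset_of_subset {t : ℕ} (ht : 3 ≤ t) {B : Fin 2 ⊕ Fin t → Set U}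
    (hB : IsMinorModel (completeBipartiteGraph (Fin 2) (Fin t)) (H ⊔ J) B)
    {w₁ w₂ : Fin 2 ⊕ Fin t} (h₁ : B w₁ ⊆ {v | v ∈ m}) (h₂ : B w₂ ⊆ {v | v ∈ m}) : w₁ = w₂ := by
  by_contra hne
  by_cases hL : ∃ i, B (.inl i) ⊆ {v | v ∈ m}
  · obtain ⟨i, hi⟩ := hL
    refine R.false_of_inl_subset ht hB hi fun i' => ?_
    by_cases hi' : B (.inl i') ⊆ {v | v ∈ m}
    · obtain ⟨v, hv⟩ := hB.nonempty (.inl i')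
      exact ⟨v, hv, mem_cons_append_of_mem (hi' hv)⟩
    obtain ⟨j, hj⟩ : ∃ j, B (.inr j) ⊆ {v | v ∈ m} := by
      rcases w₁ with a | j
      · rcases w₂ with b | j
        · have hab : a ≠ b := fun h => hne (h ▸ rfl)
          obtain rfl | rfl : i' = a ∨ i' = b := by omega
          exacts [absurd h₁ hi', absurd h₂ hi']
        · exact ⟨j, h₂⟩
      · exact ⟨j, h₁⟩
    obtain ⟨-, -, v, hv, -⟩ := R.exists_adj_inter_of_subset hB hj (w' := .inl i') (by simp)
    exact ⟨v, hv⟩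
  replace hL := not_exists.mp hL
  obtain ⟨j₁, rfl⟩ : ∃ j, w₁ = .inr j := by
    rcases w₁ with i | j
    exacts [absurd h₁ (hL i), ⟨j, rfl⟩]
  obtain ⟨j₂, rfl⟩ : ∃ j, w₂ = .inr j := by
    rcases w₂ with i | j
    exacts [absurd h₂ (hL i), ⟨j, rfl⟩]
  have hxy : ∀ i, x ∈ B (.inl i) ∨ y ∈ B (.inl i) := fun i => by
    obtain ⟨-, -, v, hv, -⟩ := R.exists_adj_inter_of_subset hB h₁ (w' := .inl i) (by simp)
    exact R.mem_or_mem_of_connected (hB.connected _) (hL i) hv.1 hv.2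
  rcases mem_and_mem_of_disjoint (hB.disjoint (.inl 0) (.inl 1) (by simp)) (hxy 0) (hxy 1)
    with ⟨hx, hy⟩ | ⟨hy, hx⟩
  all_goals
    exact R.false_of_subset_of_subset hB (by simp) hne hx hy h₁ h₂ (by simp) (by simp)
      (by simp) (by simp)

theorem exists_eq_inr_of_subset {t : ℕ} (ht : 3 ≤ t) {B : Fin 2 ⊕ Fin t → Set U}
    (hB : IsMinorModel (completeBipartiteGraph (Fin 2) (Fin t)) (H ⊔ J) B)
    {w₀ : Fin 2 ⊕ Fin t} (hw₀ : B w₀ ⊆ {v | v ∈ m})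
    (huniq : ∀ w, B w ⊆ {v | v ∈ m} → w = w₀) :
    ∃ j₀ p q, w₀ = .inr j₀ ∧ p ≠ q ∧ x ∈ B (.inl p) ∧ y ∈ B (.inl q) := by
  classical
  have hxy : ∀ w, (completeBipartiteGraph (Fin 2) (Fin t)).Adj w₀ w → x ∈ B w ∨ y ∈ B w :=
    fun w hw => by
      obtain ⟨-, -, v, hv, -⟩ := R.exists_adj_inter_of_subset hB hw₀ hw
      exact R.mem_or_mem_of_connected (hB.connected w) (fun h => hw.ne (huniq w h).symm) hv.1
        hv.2
  obtain ⟨j₀, rfl⟩ : ∃ j, w₀ = .inr j := by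
    rcases w₀ with i | j
    · exfalso
      obtain ⟨j, k, hjk, hx⟩ := Fintype.exists_ne_map_eq_of_card_lt
        (fun j : Fin 3 => decide (x ∈ B (.inr (Fin.castLE ht j)))) (by simp)
      have hd := Set.disjoint_left.mp (hB.disjoint (.inr (Fin.castLE ht j))
        (.inr (Fin.castLE ht k)) (by simpa using (Fin.castLE_injective ht).ne hjk))
      have hj := hxy (.inr (Fin.castLE ht j)) (by simp)
      have hk := hxy (.inr (Fin.castLE ht k)) (by simp)
      simp only [decide_eq_decide] at hx
      tauto
    · exact ⟨j, rfl⟩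
  rcases mem_and_mem_of_disjoint (hB.disjoint (.inl 0) (.inl 1) (by simp)) (hxy _ (by simp))
    (hxy _ (by simp)) with ⟨hx, hy⟩ | ⟨hy, hx⟩
  exacts [⟨j₀, 0, 1, rfl, by simp, hx, hy⟩, ⟨j₀, 1, 0, rfl, by simp, hx, hy⟩]

theorem isMinorModel_of_subset {t : ℕ} {B : Fin 2 ⊕ Fin t → Set U}
    (hB : IsMinorModel (completeBipartiteGraph (Fin 2) (Fin t)) (H ⊔ J) B)
    (hBz : ∀ w, z ∉ B w) {j₀ : Fin t} (hj₀ : ∀ w, B w ⊆ {v | v ∈ m} → w = .inr j₀)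
    (hsub : B (.inr j₀) ⊆ {v | v ∈ m}) {p q : Fin 2} (hpq : p ≠ q) (hx : x ∈ B (.inl p))
    (hy : y ∈ B (.inl q)) :
    IsMinorModel (completeBipartiteGraph (Fin 2) (Fin t)) (H ⊔ (edge z x ⊔ edge z y))
      fun w => B w \ {v | v ∈ m} ∪ {v | v = z ∧ w = .inr j₀} := by
  obtain ⟨-, hxm, hym, hzx, hzy, -⟩ := R.distinct
  have hxonly : ∀ w, x ∈ B w → w = .inl p := fun w h =>
    by_contra fun hw => Set.disjoint_left.mp (hB.disjoint w _ hw) h hx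
  have hyonly : ∀ w, y ∈ B w → w = .inl q := fun w h =>
    by_contra fun hw => Set.disjoint_left.mp (hB.disjoint w _ hw) h hy
  have hz : ∀ i, ∃ a ∈ B (.inl i) \ {v | v ∈ m}, (H ⊔ (edge z x ⊔ edge z y)).Adj z a := by
    intro i
    obtain rfl | rfl : i = p ∨ i = q := by omega
    exacts [⟨x, ⟨hx, hxm⟩, .inr (.inl (by simp [edge_adj, hzx]))⟩,
      ⟨y, ⟨hy, hym⟩, .inr (.inr (by simp [edge_adj, hzy]))⟩]
  refine ⟨fun w => ?_, fun w₁ w₂ hw => disjoint_diff_union hB.disjoint hBz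
    (fun _ _ h₁ h₂ => Eq.trans h₁ h₂.symm) hw, fun w₁ w₂ hw => ?_⟩
  · by_cases hw : w = .inr j₀
    · have : B w \ {v | v ∈ m} ∪ {v | v = z ∧ w = .inr j₀} = {z} := by
        ext v
        simp only [hw, and_true, Set.mem_union, Set.mem_sdiff, Set.mem_ofPred_eq,
          Set.mem_singleton_iff, or_iff_right_iff_imp, and_imp]
        exact fun hv hvm => absurd (hsub hv) hvm
      rw [this]
      exact Connected.of_subsingleton
    refine R.connected_induce_diff (hB.connected w) (fun h => hw (hj₀ w h)) (fun v hv => hv.1)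
      (fun hx' hy' => ?_) fun h => absurd h.2 hw
    exact absurd (Sum.inl_injective ((hxonly w hx').symm.trans (hyonly w hy'))) hpq
  wlog h₂ : w₂ ≠ .inr j₀ generalizing w₁ w₂
  · obtain ⟨a, ha, b, hb, hab⟩ := this w₂ w₁ hw.symm (not_not.mp h₂ ▸ hw.ne)
    exact ⟨b, hb, a, ha, hab.symm⟩
  by_cases h₁ : w₁ = .inr j₀
  · subst h₁
    obtain ⟨i, rfl⟩ : ∃ i, w₂ = .inl i := by
      rcases w₂ with i | j
      exacts [⟨i, rfl⟩, by simp at hw]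
    obtain ⟨a, ha, hza⟩ := hz i
    exact ⟨z, .inr ⟨rfl, rfl⟩, a, .inl ha, hza⟩
  rcases R.exists_adj_sdiff_or hB hw (fun h => h₁ (hj₀ w₁ h)) (fun h => h₂ (hj₀ w₂ h)) with
    ⟨u, hu, v, hv, huv⟩ | ⟨hw₁, hw₂⟩
  · exact ⟨u, .inl hu, v, .inl hv, .inl huv⟩
  have hinl : ∀ w, x ∈ B w ∨ y ∈ B w → ∃ i, w = .inl i := by
    rintro w (h | h)
    exacts [⟨p, hxonly w h⟩, ⟨q, hyonly w h⟩]
  obtain ⟨i₁, rfl⟩ := hinl w₁ hw₁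
  obtain ⟨i₂, rfl⟩ := hinl w₂ hw₂
  simp at hw

theorem isMinorModel_of_forall_not_subset (hB : IsMinorModel K (H ⊔ J) B)
    (hBz : ∀ w, z ∉ B w) (h : ∀ w, ¬ B w ⊆ {v | v ∈ m}) :
    IsMinorModel K (H ⊔ (edge z x ⊔ edge z y))
      fun w => B w \ {v | v ∈ m} ∪ {v | v = z ∧ x ∈ B w} := by
  obtain ⟨-, -, hym, -, hzy, -⟩ := R.distinct
  refine ⟨fun w => R.connected_induce_diff (hB.connected w) (h w) (fun v hv => hv.1)
    (fun hx _ => ⟨rfl, hx⟩) fun hz => .inl hz.2, fun w₁ w₂ hw => disjoint_diff_union hB.disjoint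
    hBz (fun w₁ w₂ h₁ h₂ => by_contra fun hw => Set.disjoint_left.mp (hB.disjoint _ _ hw) h₁ h₂)
    hw, fun w₁ w₂ hw => ?_⟩
  rcases R.exists_adj_sdiff_or hB hw (h w₁) (h w₂) with ⟨u, hu, v, hv, huv⟩ | ⟨h₁, h₂⟩
  · exact ⟨u, .inl hu, v, .inl hv, .inl huv⟩
  have hzy' : (edge z x ⊔ edge z y).Adj z y := .inr (by simp [edge_adj, hzy])
  rcases mem_and_mem_of_disjoint (hB.disjoint w₁ w₂ hw.ne) h₁ h₂ with ⟨hx, hy⟩ | ⟨hy, hx⟩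
  · exact ⟨z, .inr ⟨rfl, hx⟩, y, .inl ⟨hy, hym⟩, .inr hzy'⟩
  · exact ⟨y, .inl ⟨hy, hym⟩, z, .inr ⟨rfl, hx⟩, .inr hzy'.symm⟩

theorem isMinor_sup_path_of_isMinor_sup {t : ℕ} (ht : 3 ≤ t)
    (h : IsMinor (completeBipartiteGraph (Fin 2) (Fin t)) (H ⊔ J)) :
    IsMinor (completeBipartiteGraph (Fin 2) (Fin t)) (H ⊔ (edge z x ⊔ edge z y)) := by
  obtain ⟨B, hB⟩ := isMinor_iff_exists_isMinorModel.mp h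
  have hBz : ∀ w, z ∉ B w := fun w hz =>
    R.not_mem_support (hB.subset_support (completeBipartiteGraph_exists_adj (by omega)) w hz)
  rw [isMinor_iff_exists_isMinorModel]
  by_cases h : ∃ w₀, B w₀ ⊆ {v | v ∈ m}
  · obtain ⟨w₀, hw₀⟩ := h
    have huniq : ∀ w, B w ⊆ {v | v ∈ m} → w = w₀ := fun w hw =>
      R.eq_of_subset_of_subset ht hB hw hw₀
    obtain ⟨j₀, p, q, rfl, hpq, hx, hy⟩ := R.exists_eq_inr_of_subset ht hB hw₀ huniq
    exact ⟨_, R.isMinorModel_of_subset hB hBz huniq hw₀ hpq hx hy⟩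
  · exact ⟨_, R.isMinorModel_of_forall_not_subset hB hBz (not_exists.mp h)⟩

theorem isMinor_sup_path_iff (hm : m ≠ []) {t : ℕ} (ht : 3 ≤ t) :
    IsMinor (completeBipartiteGraph (Fin 2) (Fin t)) (H ⊔ (edge z x ⊔ edge z y)) ↔
      IsMinor (completeBipartiteGraph (Fin 2) (Fin t)) (H ⊔ J) :=
  ⟨R.isMinor_sup_of_isMinor_sup_path hm (completeBipartiteGraph_exists_adj (by omega)),
    R.isMinor_sup_path_of_isMinor_sup ht⟩

end PathReplacement

theorem PathReplacement.of_subgraph {G J : (⊤ : SimpleGraph U).Subgraph} {x y z : U}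
    {m : List U} (hdeg : G.neighborSet z = {x, y}) (hJG : J.verts ∩ G.verts = {x, y})
    (hJ : ∀ v, v ∈ x :: (m ++ [y]) ↔ v ∈ J.verts)
    (hJm : OuterListing J.spanningCoe (x :: (m ++ [y]))) :
    PathReplacement (G.deleteVerts {z}).spanningCoe J.spanningCoe x y z m := by
  have hxy : ∀ v ∈ J.verts, v ∈ G.verts → v = x ∨ v = y := fun v h₁ h₂ => by
    simpa using hJG.subset ⟨h₁, h₂⟩
  have hnd := hJm.1
  simp only [List.nodup_cons, List.mem_append, List.mem_cons, not_or, List.nodup_append] at hnd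
  have hzx : G.Adj z x := by simp [← Subgraph.mem_neighborSet, hdeg]
  have hzy : G.Adj z y := by simp [← Subgraph.mem_neighborSet, hdeg]
  refine ⟨hJm, fun u _ h => (hJ u).mpr h.fst_mem, fun u _ h hu => ?_,
    fun _ h => (Subgraph.deleteVerts_adj.mp h).2.1 rfl, fun hz => ?_⟩
  · rcases hxy u ((hJ u).mp (mem_cons_append_of_mem hu)) (Subgraph.deleteVerts_adj.mp h).1
      with rfl | rfl
    exacts [hnd.1.1 hu, hnd.2.2.2 u hu u (.inl rfl) rfl]
  · rcases hxy z ((hJ z).mp hz) hzx.fst_mem with h | h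
    exacts [hzx.ne h, hzy.ne h]

end PathReplacement

theorem spanningCoe_eq_deleteVerts_sup {U : Type*} {G : (⊤ : SimpleGraph U).Subgraph}
    {x y z : U} (hdeg : G.neighborSet z = {x, y}) :
    G.spanningCoe = (G.deleteVerts {z}).spanningCoe ⊔ (edge z x ⊔ edge z y) := by
  have hz : ∀ v, G.Adj z v ↔ v = x ∨ v = y := fun v => by
    rw [← Subgraph.mem_neighborSet, hdeg]
    simp
  have hzx : z ≠ x := ((hz x).mpr (.inl rfl)).ne
  have hzy : z ≠ y := ((hz y).mpr (.inr rfl)).ne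
  ext u v
  simp only [Subgraph.spanningCoe_adj, sup_adj, Subgraph.deleteVerts_adj, edge_adj,
    Set.mem_singleton_iff]
  by_cases hu : u = z
  · subst hu
    have := hz v
    constructor <;> intro h <;> aesop
  by_cases hv : v = z
  · subst hv
    have := hz u
    have := G.adj_comm u v
    constructor <;> intro h <;> aesop
  have := @Subgraph.Adj.fst_mem _ _ G u v
  have := @Subgraph.Adj.snd_mem _ _ G u v
  tauto

theorem replace_path_by_outerplanar_general {U : Type*} (t : ℕ) (ht : 3 ≤ t)
    (G J : (⊤ : SimpleGraph U).Subgraph) (z x y : U)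
    (hdeg : G.neighborSet z = {x, y})
    (hJG : J.verts ∩ G.verts = {x, y}) (hJ3 : 3 ≤ J.verts.ncard)
    (hJop : XYOuterplanar J.spanningCoe J.verts x y) :
    MinorFree (completeBipartiteGraph (Fin 2) (Fin t)) G.spanningCoe ↔
    MinorFree (completeBipartiteGraph (Fin 2) (Fin t))
      ((G.deleteVerts {z}) ⊔ J).spanningCoe := by
  classical
  obtain ⟨l, hl, hx, hy, hOL⟩ := hJop
  rw [show J.verts = l.toFinset by ext v; simp [hl], Set.ncard_coe_finset,
    List.toFinset_card_of_nodup hOL.1] at hJ3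
  obtain ⟨m, hm, rfl⟩ := exists_eq_cons_append_singleton hx hy hJ3
  rw [spanningCoe_eq_deleteVerts_sup hdeg, Subgraph.sup_spanningCoe]
  exact not_congr ((PathReplacement.of_subgraph hdeg hJG hl hOL).isMinor_sup_path_iff hm ht)

/-- Lemma 18: let `t ≥ 3`, let `z` be a degree-2 vertex of `G`
with neighbors `x` and `y`, and let `J` be an `xy`-outerplanar graph on at least
three vertices meeting `G` exactly in `{x, y}`.  If `G'` is obtained from `G` by
replacing the path `xzy` with `J`, then `G` is `K_{2,t}`-minor-free iff `G'` is
`K_{2,t}`-minor-free. -/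
theorem replace_path_by_outerplanar {U : Type*} [Fintype U] (t : ℕ) (ht : 3 ≤ t)
    (G J : (⊤ : SimpleGraph U).Subgraph) (z x y : U)
    (hz : z ∈ G.verts) (hxy : x ≠ y) (hdeg : G.neighborSet z = {x, y})
    (hJG : J.verts ∩ G.verts = {x, y}) (hJ3 : 3 ≤ J.verts.ncard)
    (hJop : XYOuterplanar J.spanningCoe J.verts x y) :
    MinorFree (completeBipartiteGraph (Fin 2) (Fin t)) G.spanningCoe ↔
    MinorFree (completeBipartiteGraph (Fin 2) (Fin t))
      ((G.deleteVerts {z}) ⊔ J).spanningCoe :=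
  replace_path_by_outerplanar_general t ht G J z x y hdeg hJG hJ3 hJop

end K24Paper
end
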